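/- arXiv:2302.08279 — 11 statements merged into one kernel-verified Lean document; each statement's English description precedes it below -/
import Mathlib

section
/- Let E and F be subsets of [n] of the same cardinality t, with increasing enumerations ẽ_1 < ... < ẽ_t and f̃_1 < ... < f̃_t. If E ≰ F (i.e., it is not the case that ẽ_i ≤ f̃_i for all i), then there exists an index k with ẽ_k > f̃_k and ẽ_k ∉ F, and there exists an index ℓ with ẽ_ℓ > f̃_ℓ and f̃_ℓ ∉ E. -/
/-!
Among the indices `i` with `f̃ᵢ < ẽᵢ` take the largest one, `k`. If `ẽₖ = f̃ⱼ`, then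
`f̃ₖ < ẽₖ = f̃ⱼ` forces `k < j`, and then `f̃ⱼ = ẽₖ < ẽⱼ` makes `j` a larger such index.
The smallest such index `l` gives `f̃ₗ ∉ E` by the mirror argument.
-/

/-- Dominance order on equal-cardinality finite sets of naturals:
the i-th smallest element of `E` is at most the i-th smallest element of `F`. -/
def Dom (E F : Finset ℕ) : Prop :=
  List.Forall₂ (· ≤ ·) (Finset.sort E (· ≤ ·)) (Finset.sort F (· ≤ ·))

/-- The k-th smallest element of `E` (1-based), with junk value 0 out of range. -/
def nth (E : Finset ℕ) (k : ℕ) : ℕ := (Finset.sort E (· ≤ ·)).getD (k - 1) 0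

/-- The (0-based) level of `e` in `E`: its index in the increasing enumeration. -/
def level (e : ℕ) (E : Finset ℕ) : ℕ := List.idxOf e (Finset.sort E (· ≤ ·))

section StrictMono

variable {ι α : Type*} [LinearOrder ι] [Finite ι] [LinearOrder α] {e f : ι → α}

theorem StrictMono.exists_lt_apply_and_larger_notMem_range (he : StrictMono e)
    (hf : StrictMono f) (h : ∃ i, f i < e i) : ∃ k, f k < e k ∧ e k ∉ Set.range f := by
  obtain ⟨k, hk, hkmax⟩ := (Set.toFinite {i | f i < e i}).exists_maximal h
  refine ⟨k, hk, ?_⟩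
  rintro ⟨j, hj⟩
  have hkj : k < j := hf.lt_iff_lt.mp (hj ▸ hk)
  have hj_exceeds : f j < e j := hj ▸ he hkj
  exact hkj.not_ge (hkmax hj_exceeds hkj.le)

theorem StrictMono.exists_lt_apply_and_smaller_notMem_range (he : StrictMono e)
    (hf : StrictMono f) (h : ∃ i, f i < e i) : ∃ l, f l < e l ∧ f l ∉ Set.range e := by
  -- Reversing both orders swaps `e` and `f` and turns the largest index into the smallest.
  obtain ⟨l, hl, hlr⟩ := hf.dual.exists_lt_apply_and_larger_notMem_range he.dual h
  exact ⟨l, hl, fun ⟨i, hi⟩ => hlr ⟨i, congrArg OrderDual.toDual hi⟩⟩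

end StrictMono

theorem nth_succ_eq_orderEmbOfFin {E : Finset ℕ} {t : ℕ} (hE : E.card = t) (i : Fin t) :
    nth E (i + 1) = E.orderEmbOfFin hE i := by
  rw [nth, Nat.add_sub_cancel, List.getD_eq_getElem _ _ (by simp [hE])]
  rfl

theorem dom_iff_forall_orderEmbOfFin_le {E F : Finset ℕ} {t : ℕ} (hE : E.card = t)
    (hF : F.card = t) :
    Dom E F ↔ ∀ i, E.orderEmbOfFin hE i ≤ F.orderEmbOfFin hF i := by
  simp [Dom, List.forall₂_iff_get, Finset.orderEmbOfFin_apply, hE, hF, Fin.forall_iff]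

theorem stmt1_general (t : ℕ) (E F : Finset ℕ)
    (hEc : E.card = t) (hFc : F.card = t) (h : ¬ Dom E F) :
    (∃ k, 1 ≤ k ∧ k ≤ t ∧ nth E k > nth F k ∧ nth E k ∉ F) ∧
    (∃ l, 1 ≤ l ∧ l ≤ t ∧ nth E l > nth F l ∧ nth F l ∉ E) := by
  have he := (E.orderEmbOfFin hEc).strictMono
  have hf := (F.orderEmbOfFin hFc).strictMono
  have hexceeds : ∃ i, F.orderEmbOfFin hFc i < E.orderEmbOfFin hEc i := by
    simpa [dom_iff_forall_orderEmbOfFin_le hEc hFc] using h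
  obtain ⟨k, hk, hkF⟩ := he.exists_lt_apply_and_larger_notMem_range hf hexceeds
  obtain ⟨l, hl, hlE⟩ := he.exists_lt_apply_and_smaller_notMem_range hf hexceeds
  simp only [Finset.range_orderEmbOfFin, Finset.mem_coe] at hkF hlE
  simp only [← nth_succ_eq_orderEmbOfFin hEc, ← nth_succ_eq_orderEmbOfFin hFc] at hk hkF hl hlE
  exact ⟨⟨k + 1, by omega, k.isLt, hk, hkF⟩, ⟨l + 1, by omega, l.isLt, hl, hlE⟩⟩

theorem stmt1 (n t : ℕ) (E F : Finset ℕ) (hEs : E ⊆ Finset.Icc 1 n) (hFs : F ⊆ Finset.Icc 1 n)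
    (hEc : E.card = t) (hFc : F.card = t) (h : ¬ Dom E F) :
    (∃ k, 1 ≤ k ∧ k ≤ t ∧ nth E k > nth F k ∧ nth E k ∉ F) ∧
    (∃ l, 1 ≤ l ∧ l ≤ t ∧ nth E l > nth F l ∧ nth F l ∉ E) :=
  stmt1_general t E F hEc hFc h
end

section
/- Let E and F be subsets of [n] of the same cardinality t with E ≤ F, and let j ≤ k be indices in {1,...,t}. Then E \ {ẽ_k} ≤ F \ {f̃_j}, where ẽ_k and f̃_j are the k-th and j-th smallest elements of E and F respectively. In particular, E \ {e} ≤ F \ {e} for any e ∈ E ∩ F. -/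
namespace List.Forall₂

variable {α : Type*} [Preorder α] {a b : List α}

theorem eraseIdx_of_le (h : Forall₂ (· ≤ ·) a b) (hb : b.Pairwise (· ≤ ·)) {p q : ℕ}
    (hqp : q ≤ p) (hp : p < a.length) :
    Forall₂ (· ≤ ·) (a.eraseIdx p) (b.eraseIdx q) := by
  have hlen := h.length_eq
  have hle : ∀ i (hi : i < a.length), a[i] ≤ b[i]'(hlen ▸ hi) := fun i hi => by
    simpa using h.get hi (hlen ▸ hi)
  rw [forall₂_iff_get]
  refine ⟨by simp only [length_eraseIdx_of_lt, hlen ▸ hp, lt_of_le_of_lt hqp, hlen], ?_⟩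
  intro i h₁ _
  rw [length_eraseIdx_of_lt hp] at h₁
  simp only [get_eq_getElem]
  rcases Nat.lt_or_ge i p with hip | hip
  · rw [getElem_eraseIdx_of_lt _ hip]
    rcases Nat.lt_or_ge i q with hiq | hiq
    · rw [getElem_eraseIdx_of_lt _ hiq]
      exact hle i (by omega)
    · rw [getElem_eraseIdx_of_ge _ hiq]
      exact (hle i (by omega)).trans (hb.rel_get_of_le (a := ⟨i, by omega⟩) (b := ⟨i + 1, by omega⟩)
        (Fin.mk_le_mk.mpr (by omega)))
  · rw [getElem_eraseIdx_of_ge _ hip, getElem_eraseIdx_of_ge _ (hqp.trans hip)]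
    exact hle (i + 1) (by omega)

theorem idxOf_le_idxOf [DecidableEq α] (h : Forall₂ (· ≤ ·) a b) (hb : b.Pairwise (· < ·))
    {e : α} (hea : e ∈ a) (heb : e ∈ b) : b.idxOf e ≤ a.idxOf e := by
  by_contra! hlt
  have hpa : a.idxOf e < a.length := idxOf_lt_length_iff.2 hea
  have hqb : b.idxOf e < b.length := idxOf_lt_length_iff.2 heb
  have hle : a[a.idxOf e] ≤ b[a.idxOf e]'(h.length_eq ▸ hpa) := by
    simpa using h.get hpa (h.length_eq ▸ hpa)
  have hlt' : b[a.idxOf e]'(h.length_eq ▸ hpa) < b[b.idxOf e] := by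
    simpa using hb.rel_get_of_lt (a := ⟨a.idxOf e, h.length_eq ▸ hpa⟩) (b := ⟨b.idxOf e, hqb⟩)
      (Fin.mk_lt_mk.mpr hlt)
  rw [getElem_idxOf] at hle hlt'
  exact lt_irrefl e (hle.trans_lt hlt')

end List.Forall₂

theorem Finset.sort_erase {α : Type*} [LinearOrder α] (E : Finset α) (x : α) :
    (E.erase x).sort (· ≤ ·) = (E.sort (· ≤ ·)).erase x := by
  refine List.Perm.eq_of_pairwise' (Finset.pairwise_sort _ _)
    ((Finset.pairwise_sort E (· ≤ ·)).sublist List.erase_sublist) ?_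
  rw [← Multiset.coe_eq_coe, Finset.sort_eq, ← Multiset.coe_erase, Finset.sort_eq,
    Finset.erase_val]

theorem nth_eq_getElem (E : Finset ℕ) {k : ℕ} (hk : k - 1 < (E.sort (· ≤ ·)).length) :
    nth E k = (E.sort (· ≤ ·))[k - 1] :=
  List.getD_eq_getElem _ _ hk

theorem Dom.erase_getElem {E F : Finset ℕ} (h : Dom E F) {p q : ℕ} (hqp : q ≤ p)
    (hp : p < (E.sort (· ≤ ·)).length) (hq : q < (F.sort (· ≤ ·)).length) :
    Dom (E.erase (E.sort (· ≤ ·))[p]) (F.erase (F.sort (· ≤ ·))[q]) := by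
  unfold Dom
  rw [Finset.sort_erase, Finset.sort_erase, (E.sort_nodup _).erase_getElem,
    (F.sort_nodup _).erase_getElem]
  exact h.eraseIdx_of_le (F.pairwise_sort _) hqp hp

theorem Dom.erase_of_mem {E F : Finset ℕ} (h : Dom E F) {e : ℕ} (heE : e ∈ E) (heF : e ∈ F) :
    Dom (E.erase e) (F.erase e) := by
  have heE' : e ∈ E.sort (· ≤ ·) := (E.mem_sort _).2 heE
  have heF' : e ∈ F.sort (· ≤ ·) := (F.mem_sort _).2 heF
  have := h.erase_getElem (h.idxOf_le_idxOf (F.sortedLT_sort).pairwise heE' heF')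
    (List.idxOf_lt_length_iff.2 heE') (List.idxOf_lt_length_iff.2 heF')
  rwa [List.getElem_idxOf, List.getElem_idxOf] at this

theorem stmt2_general (t : ℕ) (E F : Finset ℕ)
    (hEc : E.card = t) (h : Dom E F) :
    (∀ j k, 1 ≤ j → j ≤ k → k ≤ t → Dom (E.erase (nth E k)) (F.erase (nth F j))) ∧
    (∀ e ∈ E ∩ F, Dom (E.erase e) (F.erase e)) := by
  have hEl : (E.sort (· ≤ ·)).length = t := by rw [Finset.length_sort, hEc]
  have hFl : (F.sort (· ≤ ·)).length = t := h.length_eq ▸ hEl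
  refine ⟨fun j k hj hjk hkt => ?_, fun e he => ?_⟩
  · rw [nth_eq_getElem E (by omega), nth_eq_getElem F (by omega)]
    exact h.erase_getElem (by omega) (by omega) (by omega)
  · exact h.erase_of_mem (Finset.mem_inter.1 he).1 (Finset.mem_inter.1 he).2

theorem stmt2 (n t : ℕ) (E F : Finset ℕ) (hEs : E ⊆ Finset.Icc 1 n) (hFs : F ⊆ Finset.Icc 1 n)
    (hEc : E.card = t) (hFc : F.card = t) (h : Dom E F) :
    (∀ j k, 1 ≤ j → j ≤ k → k ≤ t → Dom (E.erase (nth E k)) (F.erase (nth F j))) ∧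
    (∀ e ∈ E ∩ F, Dom (E.erase e) (F.erase e)) :=
  stmt2_general t E F hEc h
end

section
/- Let E and F be subsets of [n] of the same cardinality with E ≤ F. Let g ≤ h be elements of [n] with g ∉ E and h ∉ F. Then E ∪ {g} ≤ F ∪ {h}. -/
/-!
Listing `E ∪ {g}` increasingly is inserting `g` into the increasing list of `E`. Inserting
`a ≤ b` into two sorted lists related entrywise by `≤` keeps them related, by induction on the
lists: when the two insertion points differ, the element passed over on one side is the head of
its list, so that side is again an insertion, of the head into the tail.
-/

namespace List

variable {α : Type*} [LinearOrder α]

theorem orderedInsert_eq_cons_of_pairwise {a : α} {l : List α}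
    (h : (a :: l).Pairwise (· ≤ ·)) : l.orderedInsert (· ≤ ·) a = a :: l := by
  cases l with
  | nil => rfl
  | cons b l => exact orderedInsert_cons_of_le _ l (rel_of_pairwise_cons h mem_cons_self)

theorem Forall₂.orderedInsert_le {l₁ l₂ : List α} (h : Forall₂ (· ≤ ·) l₁ l₂)
    (hl₁ : l₁.Pairwise (· ≤ ·)) (hl₂ : l₂.Pairwise (· ≤ ·)) {a b : α} (hab : a ≤ b) :
    Forall₂ (· ≤ ·) (l₁.orderedInsert (· ≤ ·) a) (l₂.orderedInsert (· ≤ ·) b) := by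
  induction h generalizing a b with
  | nil => exact .cons hab .nil
  | @cons x y l₁ l₂ hxy h ih =>
    have hl₁' := hl₁.of_cons
    have hl₂' := hl₂.of_cons
    simp only [orderedInsert_cons]
    split_ifs with hax hby hby
    · exact .cons hab (.cons hxy h)
    · refine .cons (hax.trans hxy) ?_
      rw [← orderedInsert_eq_cons_of_pairwise hl₁]
      exact ih hl₁' hl₂' (hxy.trans (le_of_not_ge hby))
    · refine .cons ((le_of_not_ge hax).trans hab) ?_
      rw [← orderedInsert_eq_cons_of_pairwise hl₂]
      exact ih hl₁' hl₂' (hab.trans hby)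
    · exact .cons hxy (ih hl₁' hl₂' hab)

end List

open scoped List in
theorem Finset.sort_insert_eq_orderedInsert {α : Type*} [LinearOrder α] {a : α}
    {s : Finset α} (ha : a ∉ s) :
    (insert a s).sort (· ≤ ·) = (s.sort (· ≤ ·)).orderedInsert (· ≤ ·) a := by
  refine List.Perm.eq_of_pairwise' (pairwise_sort _ _)
    ((pairwise_sort s _).orderedInsert a _) ?_
  calc (insert a s).sort (· ≤ ·)
      _ ~ (insert a s).toList := sort_perm_toList _ _
      _ ~ a :: s.toList := toList_insert ha
      _ ~ a :: s.sort (· ≤ ·) := .cons a (sort_perm_toList _ _).symm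
      _ ~ (s.sort (· ≤ ·)).orderedInsert (· ≤ ·) a := (List.perm_orderedInsert _ _ _).symm

theorem stmt4_general (E F : Finset ℕ) (h : Dom E F) (g hh : ℕ) (hgh : g ≤ hh)
    (hgE : g ∉ E) (hhF : hh ∉ F) :
    Dom (insert g E) (insert hh F) := by
  unfold Dom at *
  rw [Finset.sort_insert_eq_orderedInsert hgE, Finset.sort_insert_eq_orderedInsert hhF]
  exact h.orderedInsert_le (Finset.pairwise_sort _ _) (Finset.pairwise_sort _ _) hgh

theorem stmt4 (n : ℕ) (E F : Finset ℕ) (hEs : E ⊆ Finset.Icc 1 n) (hFs : F ⊆ Finset.Icc 1 n)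
    (hc : E.card = F.card) (h : Dom E F) (g hh : ℕ)
    (hg : g ∈ Finset.Icc 1 n) (hhn : hh ∈ Finset.Icc 1 n) (hgh : g ≤ hh)
    (hgE : g ∉ E) (hhF : hh ∉ F) :
    Dom (insert g E) (insert hh F) :=
  stmt4_general E F h g hh hgh hgE hhF
end

section
/- Let E and F be subsets of [n] of the same cardinality with E ≤ F. Let g ≥ h be elements of [n] with g ∉ E and h ∉ F, and assume E' := E ∪ {g} ≤ F ∪ {h} =: F'. If an element e ∈ E ∩ F occurs at the same level (i.e., has the same rank in the increasing enumeration) in E and in F, then e occurs at the same level in E' and in F'. -/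
/-!
Inserting `g` into `E` raises the level of `e` by one exactly when `g < e`, and likewise for `hh`
in `F`. Since `hh ≤ g`, the only case to exclude is `hh < e < g`. There `e` would sit one level
higher in `F'` than in `E'`; but a common element of `E' ≤ F'` can never sit higher in `F'`: if
`e = E'ᵢ` and `e = F'ⱼ` with `i < j`, then `F'ᵢ < F'ⱼ = e = E'ᵢ ≤ F'ᵢ`.
-/

namespace List

variable {α : Type*} [LinearOrder α] [BEq α] [LawfulBEq α]

theorem idxOf_eq_countP_lt {l : List α} (hl : l.Pairwise (· < ·)) {e : α} (he : e ∈ l) :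
    l.idxOf e = l.countP (· < e) := by
  induction l with
  | nil => simp at he
  | cons a t ih =>
    obtain ⟨ha, ht⟩ := pairwise_cons.1 hl
    rcases mem_cons.1 he with rfl | he
    · have : t.countP (· < e) = 0 := countP_eq_zero.2 fun x hx => by simpa using (ha x hx).le
      simp [this]
    · rw [idxOf_cons_ne _ (ha e he).ne, countP_cons_of_pos (by simpa using ha e he), ih ht he]

theorem Forall₂.idxOf_le_idxOf_s5 {l₁ l₂ : List α} (h : Forall₂ (· ≤ ·) l₁ l₂)
    (hl₂ : l₂.Pairwise (· < ·)) {e : α} (he₁ : e ∈ l₁) (he₂ : e ∈ l₂) :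
    l₂.idxOf e ≤ l₁.idxOf e := by
  by_contra! hlt
  have hk₁ := idxOf_lt_length_iff.2 he₁
  have hj₂ := idxOf_lt_length_iff.2 he₂
  have hk₂ : l₁.idxOf e < l₂.length := h.length_eq ▸ hk₁
  have hdom : l₁[l₁.idxOf e] ≤ l₂[l₁.idxOf e] := h.get hk₁ hk₂
  have hinc : l₂[l₁.idxOf e] < l₂[l₂.idxOf e] := pairwise_iff_getElem.1 hl₂ _ _ hk₂ hj₂ hlt
  rw [getElem_idxOf hk₁] at hdom
  rw [getElem_idxOf hj₂] at hinc
  exact hinc.not_ge hdom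

end List

theorem level_eq_card_filter_lt {e : ℕ} {E : Finset ℕ} (he : e ∈ E) :
    level e E = (E.filter (· < e)).card := by
  rw [level, List.idxOf_eq_countP_lt (Finset.sortedLT_sort E).pairwise (by simpa using he),
    (Finset.sort_perm_toList E (· ≤ ·)).countP_eq, ← Multiset.coe_countP, Finset.coe_toList,
    Multiset.countP_eq_card_filter, Finset.card_filter]
  simp [Finset.filter]

theorem level_insert {e x : ℕ} {E : Finset ℕ} (he : e ∈ E) (hx : x ∉ E) :
    level e (insert x E) = level e E + if x < e then 1 else 0 := by
  rw [level_eq_card_filter_lt he, level_eq_card_filter_lt (Finset.mem_insert_of_mem he),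
    Finset.filter_insert]
  split_ifs with hxe
  · rw [Finset.card_insert_of_notMem fun hm => hx (Finset.mem_filter.1 hm).1]
  · rfl

theorem Dom.level_le {E F : Finset ℕ} (h : Dom E F) {e : ℕ} (heE : e ∈ E) (heF : e ∈ F) :
    level e F ≤ level e E :=
  h.idxOf_le_idxOf_s5 (Finset.sortedLT_sort F).pairwise (by simpa using heE) (by simpa using heF)

theorem stmt5_general (E F : Finset ℕ) (g hh : ℕ) (hgh : hh ≤ g)
    (hgE : g ∉ E) (hhF : hh ∉ F)
    (h' : Dom (insert g E) (insert hh F))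
    (e : ℕ) (heE : e ∈ E) (heF : e ∈ F) (hlev : level e E = level e F) :
    level e (insert g E) = level e (insert hh F) := by
  have hE' := level_insert heE hgE
  have hF' := level_insert heF hhF
  by_cases hge : g < e
  · simp [hE', hF', hlev, hge, hgh.trans_lt hge]
  · have hle := h'.level_le (Finset.mem_insert_of_mem heE) (Finset.mem_insert_of_mem heF)
    rw [hE', hF', hlev, if_neg hge] at hle ⊢
    split_ifs at hle ⊢ <;> omega

theorem stmt5 (n : ℕ) (E F : Finset ℕ) (hEs : E ⊆ Finset.Icc 1 n) (hFs : F ⊆ Finset.Icc 1 n)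
    (hc : E.card = F.card) (h : Dom E F) (g hh : ℕ)
    (hg : g ∈ Finset.Icc 1 n) (hhn : hh ∈ Finset.Icc 1 n) (hgh : hh ≤ g)
    (hgE : g ∉ E) (hhF : hh ∉ F)
    (h' : Dom (insert g E) (insert hh F))
    (e : ℕ) (heE : e ∈ E) (heF : e ∈ F) (hlev : level e E = level e F) :
    level e (insert g E) = level e (insert hh F) :=
  stmt5_general E F g hh hgh hgE hhF h' e heE heF hlev
end

section
/- Let A and B be subsets of [n] of common cardinality t with B ≤ A, and let γ ∈ [n] \ A. Set A' := A ∪ {γ}. Let q be the least index in {1,...,t+1} such that b̃_q > ã'_q (with b̃_{t+1} = ∞), and set α' := ã'_q. Then α' ∉ B, γ ≤ α', B ∪ {α'} ≤ A', and α' has the same level in A' and in B ∪ {α'}. -/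
open Finset

section Enumeration

variable {E : Finset ℕ} {k m e : ℕ}

-- Out of range both sides take the junk value `0`.
lemma nth_eq_nat_nth (E : Finset ℕ) (k : ℕ) : nth E k = Nat.nth (· ∈ E) (k - 1) := by
  have hf : (Set.ofPred (· ∈ E)).Finite := E.finite_toSet
  rw [Nat.nth_eq_getD_sort hf, show hf.toFinset = E from finite_toSet_toFinset E, nth]

lemma card_filter_le_eq_count (E : Finset ℕ) (m : ℕ) :
    #{x ∈ E | x ≤ m} = Nat.count (· ∈ E) (m + 1) := by
  rw [Nat.count_eq_card_filter_range]
  congr 1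
  ext x
  simp [and_comm]

lemma sub_one_lt_card_toFinset (hk1 : 1 ≤ k) (hk : k ≤ #E) :
    ∀ hf : (Set.ofPred (· ∈ E)).Finite, k - 1 < #hf.toFinset := fun hf => by
  rw [show hf = E.finite_toSet from rfl, finite_toSet_toFinset]; omega

lemma nth_lt_nth {j : ℕ} (hj : 1 ≤ j) (hjk : j < k) (hk : k ≤ #E) : nth E j < nth E k := by
  rw [nth_eq_nat_nth, nth_eq_nat_nth]
  exact Nat.nth_lt_nth' (by omega) (sub_one_lt_card_toFinset (by omega) hk)

lemma card_filter_le_nth (hk1 : 1 ≤ k) (hk : k ≤ #E) : #{x ∈ E | x ≤ nth E k} = k := by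
  rw [card_filter_le_eq_count, nth_eq_nat_nth, Nat.count_nth_succ (sub_one_lt_card_toFinset hk1 hk)]
  omega

lemma nth_le_iff_le_card_filter (hk1 : 1 ≤ k) (hk : k ≤ #E) :
    nth E k ≤ m ↔ k ≤ #{x ∈ E | x ≤ m} := by
  refine ⟨fun h => ?_, fun h => ?_⟩
  · calc k = #{x ∈ E | x ≤ nth E k} := (card_filter_le_nth hk1 hk).symm
      _ ≤ #{x ∈ E | x ≤ m} := card_le_card (monotone_filter_right _ fun _ _ hx => hx.trans h)
  · rw [card_filter_le_eq_count] at h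
    rw [nth_eq_nat_nth, ← Nat.lt_add_one_iff]
    exact Nat.nth_lt_of_lt_count (by omega)

lemma nth_card_filter_le (he : e ∈ E) : nth E #{x ∈ E | x ≤ e} = e := by
  rw [nth_eq_nat_nth, card_filter_le_eq_count, Nat.count_succ, if_pos he, Nat.add_sub_cancel,
    Nat.nth_count he]

lemma level_nth (hk1 : 1 ≤ k) (hk : k ≤ #E) : level (nth E k) E = k - 1 := by
  have hk' : k - 1 < (E.sort (· ≤ ·)).length := by rw [length_sort]; omega
  rw [level, nth, List.getD_eq_getElem _ _ hk', (sort_nodup _ _).idxOf_getElem]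

lemma level_eq_card_filter_le_sub_one (he : e ∈ E) : level e E = #{x ∈ E | x ≤ e} - 1 := by
  have h1 : 1 ≤ #{x ∈ E | x ≤ e} := card_pos.2 ⟨e, mem_filter.2 ⟨he, le_rfl⟩⟩
  conv_lhs => rw [← nth_card_filter_le he]
  exact level_nth h1 (card_le_card (filter_subset _ _))

lemma dom_iff_forall_nth_le {E F : Finset ℕ} (h : #E = #F) :
    Dom E F ↔ ∀ k, 1 ≤ k → k ≤ #E → nth E k ≤ nth F k := by
  simp only [Dom, List.forall₂_iff_get, length_sort, h, true_and, List.get_eq_getElem]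
  refine ⟨fun H k hk1 hk => ?_, fun H i hi _ => ?_⟩
  · have hk' : k - 1 < #F := by omega
    simpa [nth, List.getD_eq_getElem?_getD, hk', h ▸ hk'] using H (k - 1) hk' hk'
  · simpa [nth, List.getD_eq_getElem?_getD, hi, h ▸ hi] using H (i + 1) (by omega) (by omega)

lemma dom_iff_card_filter_le {E F : Finset ℕ} (h : #E = #F) :
    Dom E F ↔ ∀ m, #{x ∈ F | x ≤ m} ≤ #{x ∈ E | x ≤ m} := by
  rw [dom_iff_forall_nth_le h]
  refine ⟨fun H m => ?_, fun H k hk1 hk => ?_⟩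
  · set k := #{x ∈ F | x ≤ m}
    have hkF : k ≤ #F := card_le_card (filter_subset _ _)
    rcases Nat.eq_zero_or_pos k with hk0 | hk1
    · omega
    · have hF : nth F k ≤ m := (nth_le_iff_le_card_filter hk1 hkF).2 le_rfl
      exact (nth_le_iff_le_card_filter hk1 (h ▸ hkF)).1 ((H k hk1 (h ▸ hkF)).trans hF)
  · rw [nth_le_iff_le_card_filter hk1 hk]
    exact (card_filter_le_nth hk1 (h ▸ hk)).symm.le.trans (H _)

end Enumeration

section FirstExceedance

variable {B C : Finset ℕ} {q : ℕ}

lemma card_filter_le_le_of_lt_nth (hq1 : 1 ≤ q) (hqB : q ≤ #B + 1) (hqC : q ≤ #C)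
    (hqmin : ∀ r, 1 ≤ r → r < q → nth B r ≤ nth C r) {m : ℕ} (hm : m < nth C q) :
    #{x ∈ C | x ≤ m} ≤ #{x ∈ B | x ≤ m} := by
  set k := #{x ∈ C | x ≤ m}
  have hkq : k < q := by
    by_contra! h
    exact (nth_le_iff_le_card_filter hq1 hqC).2 h |>.not_gt hm
  rcases Nat.eq_zero_or_pos k with hk0 | hk1
  · omega
  · have hC : nth C k ≤ m := (nth_le_iff_le_card_filter hk1 (by omega)).2 le_rfl
    exact (nth_le_iff_le_card_filter hk1 (by omega)).1 ((hqmin k hk1 hkq).trans hC)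

lemma card_filter_le_nth_eq_sub_one (hq1 : 1 ≤ q) (hqB : q ≤ #B + 1) (hqC : q ≤ #C)
    (hqP : q ≤ #B → nth C q < nth B q) (hqmin : ∀ r, 1 ≤ r → r < q → nth B r ≤ nth C r) :
    #{x ∈ B | x ≤ nth C q} = q - 1 := by
  refine le_antisymm ?_ ?_
  · rcases le_or_gt q #B with hq | hq
    · have hlt := (nth_le_iff_le_card_filter hq1 hq).not.1 (hqP hq).not_ge
      omega
    · exact (card_le_card (filter_subset _ _)).trans (by omega)
  · rcases Nat.lt_or_ge 1 q with hq | hq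
    · have hlt : nth B (q - 1) < nth C q :=
        (hqmin _ (by omega) (by omega)).trans_lt (nth_lt_nth (by omega) (by omega) hqC)
      exact (nth_le_iff_le_card_filter (by omega) (by omega)).1 hlt.le
    · omega

lemma nth_notMem_of_first_exceed (hq1 : 1 ≤ q) (hqB : q ≤ #B + 1) (hqC : q ≤ #C)
    (hqP : q ≤ #B → nth C q < nth B q) (hqmin : ∀ r, 1 ≤ r → r < q → nth B r ≤ nth C r) :
    nth C q ∉ B := by
  intro hB
  have hcard := card_filter_le_nth_eq_sub_one hq1 hqB hqC hqP hqmin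
  have hpos : 0 < #{x ∈ B | x ≤ nth C q} := card_pos.2 ⟨_, mem_filter.2 ⟨hB, le_rfl⟩⟩
  have heq : nth B (q - 1) = nth C q := hcard ▸ nth_card_filter_le hB
  have hle := hqmin (q - 1) (by omega) (by omega)
  have hlt := nth_lt_nth (E := C) (by omega) (show q - 1 < q by omega) hqC
  omega

end FirstExceedance

lemma dom_insert_nth_insert_of_first_exceed {A B : Finset ℕ} {γ q : ℕ} (hAB : #A = #B)
    (hdom : Dom B A) (hγA : γ ∉ A) (hq1 : 1 ≤ q) (hqB : q ≤ #B + 1)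
    (hqP : q ≤ #B → nth (insert γ A) q < nth B q)
    (hqmin : ∀ r, 1 ≤ r → r < q → nth B r ≤ nth (insert γ A) r) :
    Dom (insert (nth (insert γ A) q) B) (insert γ A) := by
  set A' := insert γ A
  set α := nth A' q
  have hA' : #A' = #A + 1 := card_insert_of_notMem hγA
  have hαB : α ∉ B := nth_notMem_of_first_exceed hq1 hqB (by omega) hqP hqmin
  rw [dom_iff_card_filter_le (by rw [card_insert_of_notMem hαB, hA', hAB])]
  intro m
  rcases lt_or_ge m α with hm | hm
  · exact (card_filter_le_le_of_lt_nth hq1 hqB (by omega) hqmin hm).trans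
      (card_le_card (filter_subset_filter _ (subset_insert _ _)))
  · have hA := (dom_iff_card_filter_le hAB.symm).1 hdom m
    calc #{x ∈ A' | x ≤ m} ≤ #{x ∈ A | x ≤ m} + 1 := by
          rw [filter_insert]; split_ifs <;> simp [card_insert_le]
      _ ≤ #{x ∈ B | x ≤ m} + 1 := by omega
      _ = #{x ∈ insert α B | x ≤ m} := by
          rw [filter_insert, if_pos hm, card_insert_of_notMem (by simp [hαB])]

theorem stmt6_general (t : ℕ) (A B : Finset ℕ)
    (hAc : A.card = t) (hBc : B.card = t) (hdom : Dom B A)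
    (γ : ℕ) (hγA : γ ∉ A)
    (q : ℕ) (hq1 : 1 ≤ q) (hq2 : q ≤ t + 1)
    -- q satisfies the defining property (with the convention b̃_{t+1} = ∞, the case q = t+1
    -- holds vacuously):
    (hqP : q ≤ t → nth B q > nth (insert γ A) q)
    -- q is least with this property:
    (hqmin : ∀ r, 1 ≤ r → r < q → nth B r ≤ nth (insert γ A) r) :
    nth (insert γ A) q ∉ B ∧
    γ ≤ nth (insert γ A) q ∧
    Dom (insert (nth (insert γ A) q) B) (insert γ A) ∧
    level (nth (insert γ A) q) (insert γ A) =
      level (nth (insert γ A) q) (insert (nth (insert γ A) q) B) := by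
  subst hBc
  set α := nth (insert γ A) q
  have hA' : #(insert γ A) = #B + 1 := by rw [card_insert_of_notMem hγA, hAc]
  have hαB : α ∉ B := nth_notMem_of_first_exceed hq1 hq2 (by omega) hqP hqmin
  have hBα : #{x ∈ B | x ≤ α} = q - 1 :=
    card_filter_le_nth_eq_sub_one hq1 hq2 (by omega) hqP hqmin
  have hA'α : #{x ∈ insert γ A | x ≤ α} = q := card_filter_le_nth hq1 (by omega)
  refine ⟨hαB, ?_, dom_insert_nth_insert_of_first_exceed hAc hdom hγA hq1 hq2 hqP hqmin, ?_⟩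
  · by_contra! hγα
    have hAα : #{x ∈ A | x ≤ α} = q := by rwa [filter_insert, if_neg hγα.not_ge] at hA'α
    have hBA := (dom_iff_card_filter_le hAc.symm).1 hdom α
    omega
  · rw [level_nth hq1 (by omega), level_eq_card_filter_le_sub_one (mem_insert_self _ _),
      filter_insert, if_pos le_rfl, card_insert_of_notMem (by simp [hαB]), hBα]
    omega

theorem stmt6 (n t : ℕ) (A B : Finset ℕ) (hAs : A ⊆ Finset.Icc 1 n) (hBs : B ⊆ Finset.Icc 1 n)
    (hAc : A.card = t) (hBc : B.card = t) (hdom : Dom B A)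
    (γ : ℕ) (hγ : γ ∈ Finset.Icc 1 n) (hγA : γ ∉ A)
    (q : ℕ) (hq1 : 1 ≤ q) (hq2 : q ≤ t + 1)
    -- q satisfies the defining property (with the convention b̃_{t+1} = ∞, the case q = t+1
    -- holds vacuously):
    (hqP : q ≤ t → nth B q > nth (insert γ A) q)
    -- q is least with this property:
    (hqmin : ∀ r, 1 ≤ r → r < q → nth B r ≤ nth (insert γ A) r) :
    nth (insert γ A) q ∉ B ∧
    γ ≤ nth (insert γ A) q ∧
    Dom (insert (nth (insert γ A) q) B) (insert γ A) ∧
    level (nth (insert γ A) q) (insert γ A) =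
      level (nth (insert γ A) q) (insert (nth (insert γ A) q) B) :=
  stmt6_general t A B hAc hBc hdom γ hγA q hq1 hq2 hqP hqmin
end

section
/- In the setting of the maximal-lift subroutine (B ≤ A, γ ∉ A, A' = A ∪ {γ}, B' = B ∪ {α'} with α' the q-th smallest element of A' for q least with b̃_q > ã'_q): any element that is at the same level in A and B is at the same level in A' and B'. -/
/-! The level of `a` in `E` is `Nat.count (· ∈ E) a`, the number of elements of `E` below `a`,
and the `r`-th smallest element of `E` is `Nat.nth (· ∈ E) (r - 1)`. Inserting `γ` into `A`
and `α'` into `B` raises the count at `α` by `[γ < α]` and `[α' < α]` respectively (`α' ∉ B`,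
since `B` lies weakly below `A'` before level `q` and strictly above it at level `q`), so it
suffices that `γ < α ↔ α' < α`. If `γ < α`, then `α` sits one level higher in `A'` than in `B`,
which forces `q` to be at most the level of `α` in `B`, hence `α' < α`. Conversely `γ ≤ α'`:
an element of `A'` below `γ` has the same level in `A`, where dominance `B ≤ A` keeps `B`
from exceeding it. -/

open Finset

namespace Finset

variable {E : Finset ℕ} {a r s : ℕ}

lemma card_toFinset_ofPred_mem (hf : (Set.ofPred (· ∈ E)).Finite) : #hf.toFinset = #E := by
  simp

lemma forall_lt_card_toFinset_ofPred_mem (h : r < #E) :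
    ∀ hf : (Set.ofPred (· ∈ E)).Finite, r < #hf.toFinset := fun hf => by
  rwa [card_toFinset_ofPred_mem]

lemma count_mem_eq_card_filter_lt (E : Finset ℕ) (a : ℕ) :
    Nat.count (· ∈ E) a = #{x ∈ E | x < a} := by
  rw [Nat.count_eq_card_filter_range]
  congr 1
  ext x
  simp [and_comm]

lemma count_mem_lt_card (ha : a ∈ E) : Nat.count (· ∈ E) a < #E := by
  simpa using Nat.count_lt_card E.finite_toSet ha

lemma count_mem_nth (h : r < #E) : Nat.count (· ∈ E) (Nat.nth (· ∈ E) r) = r :=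
  Nat.count_nth (forall_lt_card_toFinset_ofPred_mem h)

lemma nth_mem_le_nth_mem (hrs : r ≤ s) (hs : s < #E) :
    Nat.nth (· ∈ E) r ≤ Nat.nth (· ∈ E) s :=
  Nat.nth_le_nth' hrs (forall_lt_card_toFinset_ofPred_mem hs)

lemma count_mem_insert {x : ℕ} (hx : x ∉ E) (a : ℕ) :
    Nat.count (· ∈ insert x E) a = Nat.count (· ∈ E) a + if x < a then 1 else 0 := by
  rw [count_mem_eq_card_filter_lt, count_mem_eq_card_filter_lt, filter_insert]
  split_ifs
  · exact card_insert_of_notMem (by simp [hx])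
  · rfl

end Finset

lemma nth_add_one_eq_nth_mem (E : Finset ℕ) (r : ℕ) : nth E (r + 1) = Nat.nth (· ∈ E) r := by
  rw [nth, Nat.add_sub_cancel, Nat.nth_eq_getD_sort (p := (· ∈ E)) E.finite_toSet]
  simp

lemma level_eq_count_mem {E : Finset ℕ} {a : ℕ} (ha : a ∈ E) :
    level a E = Nat.count (· ∈ E) a := by
  have hlt : level a E < #E := by
    rw [← length_sort (· ≤ ·)]
    exact List.idxOf_lt_length_iff.2 ((mem_sort _).2 ha)
  have hnth : Nat.nth (· ∈ E) (level a E) = a := by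
    rw [← nth_add_one_eq_nth_mem, nth, Nat.add_sub_cancel, level,
      List.getD_eq_getElem _ _ (by simpa [level] using hlt)]
    exact List.getElem_idxOf _
  rw [← hnth, count_mem_nth hlt, hnth]

lemma Dom.card_eq {B A : Finset ℕ} (h : Dom B A) : #B = #A := by
  simpa using h.length_eq

lemma Dom.nth_mem_le {B A : Finset ℕ} (h : Dom B A) {r : ℕ} (hr : r < #B) :
    Nat.nth (· ∈ B) r ≤ Nat.nth (· ∈ A) r := by
  have hrA : r < #A := h.card_eq ▸ hr
  rw [← nth_add_one_eq_nth_mem, ← nth_add_one_eq_nth_mem, nth, nth, Nat.add_sub_cancel,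
    List.getD_eq_getElem _ _ (by simpa using hr), List.getD_eq_getElem _ _ (by simpa using hrA)]
  exact List.forall₂_iff_get.1 h |>.2 _ _ _

/-- With `E = B` and `F = A'`, this says that `j + 1` is the index `q` of the maximal-lift step
(`Nat.nth` counts levels from `0`). -/
def IsFirstExcessLevel (E F : Finset ℕ) (j : ℕ) : Prop :=
  (j < #E → Nat.nth (· ∈ F) j < Nat.nth (· ∈ E) j) ∧
    ∀ r < j, Nat.nth (· ∈ E) r ≤ Nat.nth (· ∈ F) r

namespace IsFirstExcessLevel

variable {A B E F : Finset ℕ} {γ j α : ℕ}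

lemma nth_notMem (h : IsFirstExcessLevel E F j) (hj : j < #F) : Nat.nth (· ∈ F) j ∉ E := by
  set x := Nat.nth (· ∈ F) j
  intro hx
  set m := Nat.count (· ∈ E) x
  have hEm : Nat.nth (· ∈ E) m = x := Nat.nth_count hx
  have hm : m < #E := count_mem_lt_card hx
  rcases lt_or_ge m j with hmj | hjm
  · have hFm : Nat.nth (· ∈ F) m < x := Nat.nth_lt_of_lt_count (by rwa [count_mem_nth hj])
    have := h.2 m hmj
    omega
  · have := h.1 (hjm.trans_lt hm)
    have := nth_mem_le_nth_mem hjm hm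
    omega

lemma le_nth_insert (h : IsFirstExcessLevel B (insert γ A) j) (hdom : Dom B A) (hγA : γ ∉ A)
    (hj : j ≤ #A) : γ ≤ Nat.nth (· ∈ insert γ A) j := by
  set x := Nat.nth (· ∈ insert γ A) j
  by_contra! hxγ
  have hjA' : j < #(insert γ A) := by rw [card_insert_of_notMem hγA]; omega
  have hxA : x ∈ A :=
    (mem_insert.1 (Nat.nth_mem _ (forall_lt_card_toFinset_ofPred_mem hjA'))).resolve_left
      hxγ.ne
  have hcount : Nat.count (· ∈ A) x = j := by
    have := count_mem_nth hjA'
    rwa [count_mem_insert hγA, if_neg hxγ.not_gt, Nat.add_zero] at this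
  have hjB : j < #B := hdom.card_eq ▸ hcount ▸ count_mem_lt_card hxA
  have hAx : Nat.nth (· ∈ A) j = x := hcount ▸ Nat.nth_count hxA
  have := hdom.nth_mem_le hjB
  have := h.1 hjB
  omega

lemma nth_insert_lt (h : IsFirstExcessLevel B (insert γ A) j) (hγA : γ ∉ A) (hαB : α ∈ B)
    (hcount : Nat.count (· ∈ A) α = Nat.count (· ∈ B) α) (hγα : γ < α) :
    Nat.nth (· ∈ insert γ A) j < α := by
  have hA' : Nat.count (· ∈ insert γ A) α = Nat.count (· ∈ B) α + 1 := by
    rw [count_mem_insert hγA, if_pos hγα, hcount]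
  have hjk : j ≤ Nat.count (· ∈ B) α := by
    by_contra! hkj
    have hB := h.2 _ hkj
    rw [Nat.nth_count hαB] at hB
    have hA : Nat.nth (· ∈ insert γ A) (Nat.count (· ∈ B) α) < α :=
      Nat.nth_lt_of_lt_count (by omega)
    omega
  exact Nat.nth_lt_of_lt_count (by omega)

lemma count_mem_insert_eq (h : IsFirstExcessLevel B (insert γ A) j) (hdom : Dom B A)
    (hγA : γ ∉ A) (hj : j ≤ #A) (hαB : α ∈ B)
    (hcount : Nat.count (· ∈ A) α = Nat.count (· ∈ B) α) :
    Nat.count (· ∈ insert γ A) α =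
      Nat.count (· ∈ insert (Nat.nth (· ∈ insert γ A) j) B) α := by
  have hjA' : j < #(insert γ A) := by rw [card_insert_of_notMem hγA]; omega
  have hiff : γ < α ↔ Nat.nth (· ∈ insert γ A) j < α :=
    ⟨h.nth_insert_lt hγA hαB hcount, (h.le_nth_insert hdom hγA hj).trans_lt⟩
  rw [count_mem_insert hγA, count_mem_insert (h.nth_notMem hjA'), hcount]
  simp only [hiff]

end IsFirstExcessLevel

theorem stmt8_general (t : ℕ) (A B : Finset ℕ)
    (hAc : A.card = t) (hBc : B.card = t) (hdom : Dom B A)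
    (γ : ℕ) (hγA : γ ∉ A)
    (q : ℕ) (hq1 : 1 ≤ q) (hq2 : q ≤ t + 1)
    (hqP : q ≤ t → nth B q > nth (insert γ A) q)
    (hqmin : ∀ r, 1 ≤ r → r < q → nth B r ≤ nth (insert γ A) r) :
    ∀ α, α ∈ A → α ∈ B → level α A = level α B →
      level α (insert γ A) = level α (insert (nth (insert γ A) q) B) := by
  intro α hαA hαB hlev
  obtain ⟨j, rfl⟩ : ∃ j, q = j + 1 := ⟨q - 1, by omega⟩
  have hfirst : IsFirstExcessLevel B (insert γ A) j := by
    refine ⟨fun hj => ?_, fun r hr => ?_⟩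
    · simpa only [nth_add_one_eq_nth_mem] using hqP (by omega)
    · simpa only [nth_add_one_eq_nth_mem] using hqmin (r + 1) (by omega) (by omega)
  rw [level_eq_count_mem hαA, level_eq_count_mem hαB] at hlev
  rw [nth_add_one_eq_nth_mem, level_eq_count_mem (mem_insert_of_mem hαA),
    level_eq_count_mem (mem_insert_of_mem hαB)]
  exact hfirst.count_mem_insert_eq hdom hγA (by omega) hαB hlev

theorem stmt8 (n t : ℕ) (A B : Finset ℕ) (hAs : A ⊆ Finset.Icc 1 n) (hBs : B ⊆ Finset.Icc 1 n)
    (hAc : A.card = t) (hBc : B.card = t) (hdom : Dom B A)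
    (γ : ℕ) (hγ : γ ∈ Finset.Icc 1 n) (hγA : γ ∉ A)
    (q : ℕ) (hq1 : 1 ≤ q) (hq2 : q ≤ t + 1)
    (hqP : q ≤ t → nth B q > nth (insert γ A) q)
    (hqmin : ∀ r, 1 ≤ r → r < q → nth B r ≤ nth (insert γ A) r) :
    ∀ α, α ∈ A → α ∈ B → level α A = level α B →
      level α (insert γ A) = level α (insert (nth (insert γ A) q) B) :=
  stmt8_general t A B hAc hBc hdom γ hγA q hq1 hq2 hqP hqmin
end

section
/- Let A and B be subsets of [n] of common cardinality t with A ≤ B, and let γ ∈ [n] \ A. Set A' := A ∪ {γ}. Let q be the maximum index in {1,...,t+1} such that ã'_q > b̃_{q-1} (with b̃_0 = 0), and set α' := ã'_q. Then α' ∉ B, α' ≤ γ, A' ≤ B ∪ {α'}, and α' has the same level in A' and in B ∪ {α'}. -/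
open Finset

variable {E F : Finset ℕ} {a b i j q x : ℕ}

lemma nth_eq_getElem_s9 (h1 : 1 ≤ i) (h2 : i ≤ #E) :
    nth E i = (E.sort (· ≤ ·))[i - 1]'(by rw [length_sort]; omega) :=
  List.getD_eq_getElem _ _ _

lemma nth_mem (h1 : 1 ≤ i) (h2 : i ≤ #E) : nth E i ∈ E := by
  rw [nth_eq_getElem_s9 h1 h2, ← mem_sort (· ≤ ·)]
  exact List.getElem_mem _

lemma nth_strictMonoOn : StrictMonoOn (nth E) (Set.Icc 1 #E) := by
  rintro i ⟨hi1, hi2⟩ j ⟨hj1, hj2⟩ hij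
  rw [nth_eq_getElem_s9 hi1 hi2, nth_eq_getElem_s9 hj1 hj2]
  exact E.sortedLT_sort.getElem_lt_getElem_of_lt (by omega)

lemma nth_lt_nth_s9 (h1 : 1 ≤ i) (hij : i < j) (h2 : j ≤ #E) : nth E i < nth E j :=
  nth_strictMonoOn ⟨h1, by omega⟩ ⟨by omega, h2⟩ hij

lemma nth_le_nth (h1 : 1 ≤ i) (hij : i ≤ j) (h2 : j ≤ #E) : nth E i ≤ nth E j :=
  hij.eq_or_lt.elim (fun h => h ▸ le_rfl) fun h => (nth_lt_nth_s9 h1 h h2).le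

lemma exists_nth_eq (he : a ∈ E) : ∃ i, 1 ≤ i ∧ i ≤ #E ∧ nth E i = a := by
  obtain ⟨k, hk, rfl⟩ := List.getElem_of_mem ((mem_sort (· ≤ ·)).2 he)
  rw [length_sort] at hk
  exact ⟨k + 1, by omega, by omega, by rw [nth_eq_getElem_s9 (by omega) (by omega)]; rfl⟩

lemma level_nth_s9 (h1 : 1 ≤ i) (h2 : i ≤ #E) : level (nth E i) E = i - 1 := by
  rw [nth_eq_getElem_s9 h1 h2]
  exact (E.sort_nodup _).idxOf_getElem _ _

lemma dom_iff : Dom E F ↔ #E = #F ∧ ∀ i, 1 ≤ i → i ≤ #E → nth E i ≤ nth F i := by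
  rw [Dom, List.forall₂_iff_get]
  simp only [length_sort]
  refine and_congr_right fun hEF => ⟨fun h i h1 h2 => ?_, fun h k hkE hkF => ?_⟩
  · rw [nth_eq_getElem_s9 h1 h2, nth_eq_getElem_s9 h1 (hEF ▸ h2)]
    exact h (i - 1) (by omega) (by omega)
  · have := h (k + 1) (by omega) (by omega)
    rwa [nth_eq_getElem_s9 (by omega) (by omega), nth_eq_getElem_s9 (E := F) (by omega) (by omega)]
      at this

lemma nth_lt_iff (h1 : 1 ≤ i) (h2 : i ≤ #E) : nth E i < x ↔ i ≤ #{e ∈ E | e < x} := by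
  constructor
  · intro hx
    have hinj : Set.InjOn (nth E) (Icc 1 i) :=
      nth_strictMonoOn.injOn.mono fun k hk => by
        rw [coe_Icc, Set.mem_Icc] at hk
        exact ⟨hk.1, by omega⟩
    calc i = #((Icc 1 i).image (nth E)) := by rw [card_image_of_injOn hinj, Nat.card_Icc]; omega
      _ ≤ #{e ∈ E | e < x} := card_le_card <| image_subset_iff.2 fun k hk => by
          rw [mem_Icc] at hk
          exact mem_filter.2 ⟨nth_mem hk.1 (by omega), (nth_le_nth hk.1 hk.2 h2).trans_lt hx⟩
  · intro hcard
    by_contra! hx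
    have hsub : {e ∈ E | e < x} ⊆ (Ico 1 i).image (nth E) := fun e he => by
      obtain ⟨heE, hex⟩ := mem_filter.1 he
      obtain ⟨k, hk1, hkE, rfl⟩ := exists_nth_eq heE
      have hki : k < i := by
        by_contra! hik
        exact (hx.trans (nth_le_nth h1 hik hkE)).not_gt hex
      exact mem_image.2 ⟨k, mem_Ico.2 ⟨hk1, hki⟩, rfl⟩
    have := (card_le_card hsub).trans card_image_le
    rw [Nat.card_Ico] at this
    omega

lemma nth_le_iff (h1 : 1 ≤ i) (h2 : i ≤ #E) : nth E i ≤ x ↔ i ≤ #{e ∈ E | e ≤ x} := by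
  simpa only [Nat.lt_succ_iff] using nth_lt_iff (x := x + 1) h1 h2

lemma card_filter_lt_nth (h1 : 1 ≤ i) (h2 : i ≤ #E) : #{e ∈ E | e < nth E i} = i - 1 := by
  have hlt : ¬ i ≤ #{e ∈ E | e < nth E i} := (nth_lt_iff h1 h2).not.1 (lt_irrefl _)
  rcases Nat.lt_or_ge i 2 with hi | hi
  · omega
  · have := (nth_lt_iff (by omega) (by omega)).1
      (nth_lt_nth_s9 (E := E) (i := i - 1) (by omega) (by omega) h2)
    omega

lemma nth_eq_of_card_filter_lt (hx : x ∈ E) (h1 : 1 ≤ i) (h : #{e ∈ E | e < x} = i - 1) :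
    nth E i = x := by
  obtain ⟨k, hk1, hkE, rfl⟩ := exists_nth_eq hx
  rw [card_filter_lt_nth hk1 hkE] at h
  rw [show i = k by omega]

lemma nth_le_nth_of_subset (hEF : E ⊆ F) (h1 : 1 ≤ i) (h2 : i ≤ #E) : nth F i ≤ nth E i :=
  (nth_le_iff h1 (h2.trans (card_le_card hEF))).2 <|
    ((nth_le_iff h1 h2).1 le_rfl).trans (card_le_card (filter_subset_filter _ hEF))

lemma nth_sub_one_le_nth_insert (h2 : 2 ≤ i) (hi : i ≤ #(insert a E)) :
    nth E (i - 1) ≤ nth (insert a E) i := by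
  have hE : i - 1 ≤ #E := by have := card_insert_le a E; omega
  set y := nth (insert a E) i
  have hy : i ≤ #{e ∈ insert a E | e ≤ y} := (nth_le_iff (by omega) hi).1 le_rfl
  have hins : #{e ∈ insert a E | e ≤ y} ≤ #{e ∈ E | e ≤ y} + 1 := by
    rw [filter_insert]
    split_ifs
    · exact card_insert_le _ _
    · omega
  exact (nth_le_iff (by omega) hE).2 (by omega)

lemma nth_le_nth_insert_of_lt (h1 : 1 ≤ i) (h2 : i ≤ #E) (h : nth (insert a E) i < a) :
    nth E i ≤ nth (insert a E) i := by
  have hy := (nth_le_iff h1 (h2.trans (card_le_card (subset_insert a E)))).1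
    (le_refl (nth (insert a E) i))
  rw [filter_insert, if_neg h.not_ge] at hy
  exact (nth_le_iff h1 h2).2 hy

lemma nth_insert_le_of_nth_sub_one_lt (ha : a ∉ E) (h1 : 1 ≤ i) (hi : i ≤ #E + 1)
    (h : 2 ≤ i → nth E (i - 1) < nth (insert a E) i) : nth (insert a E) i ≤ a := by
  by_contra! hlt
  set x := nth (insert a E) i
  have hx : ¬ i ≤ #{e ∈ insert a E | e < x} :=
    (nth_lt_iff h1 (by rwa [card_insert_of_notMem ha])).not.1 (lt_irrefl x)
  rw [filter_insert, if_pos hlt, card_insert_of_notMem fun h => ha (mem_filter.1 h).1] at hx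
  have := (nth_lt_iff (by omega) (by omega)).1 (h (by omega))
  omega

lemma notMem_of_between (h1 : 1 ≤ q) (hq : q ≤ #E + 1) (hlo : 2 ≤ q → nth E (q - 1) < a)
    (hhi : q ≤ #E → a < nth E q) : a ∉ E := by
  intro ha
  obtain ⟨k, hk1, hkE, rfl⟩ := exists_nth_eq ha
  rcases le_or_gt q k with hqk | hkq
  · exact (hhi (hqk.trans hkE)).not_ge (nth_le_nth h1 hqk hkE)
  · exact (hlo (by omega)).not_ge (nth_le_nth hk1 (by omega) (by omega))

lemma nth_insert_eq_of_between (h1 : 1 ≤ q) (hq : q ≤ #E + 1) (hlo : 2 ≤ q → nth E (q - 1) < a)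
    (hhi : q ≤ #E → a < nth E q) : nth (insert a E) q = a := by
  have hbelow : q - 1 ≤ #{e ∈ E | e < a} := by
    rcases Nat.lt_or_ge q 2 with hq2 | hq2
    · omega
    · exact (nth_lt_iff (by omega) (by omega)).1 (hlo hq2)
  have habove : #{e ∈ E | e < a} < q := by
    rcases Nat.lt_or_ge #E q with hEq | hqE
    · exact (card_filter_le _ _).trans_lt hEq
    · exact not_le.1 ((nth_lt_iff h1 hqE).not.1 (hhi hqE).not_gt)
  apply nth_eq_of_card_filter_lt (mem_insert_self a E) h1
  rw [filter_insert, if_neg (lt_irrefl a)]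
  omega

lemma Dom.insert_insert (hdom : Dom E F) (hb : b ∉ E) (ha : a ∉ F) (h1 : 1 ≤ q)
    (hq : q ≤ #E + 1) (hE : nth (insert b E) q = a) (hF : nth (insert a F) q = a)
    (hmax : ∀ r, q < r → r ≤ #E + 1 → nth (insert b E) r ≤ nth F (r - 1)) :
    Dom (insert b E) (insert a F) := by
  obtain ⟨hcard, hle⟩ := dom_iff.1 hdom
  have hbE : #(insert b E) = #E + 1 := card_insert_of_notMem hb
  have haF : #(insert a F) = #E + 1 := by rw [card_insert_of_notMem ha, hcard]
  refine dom_iff.2 ⟨by omega, fun j hj1 hj2 => ?_⟩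
  rcases lt_trichotomy j q with hjq | rfl | hqj
  · calc nth (insert b E) j ≤ nth E j := nth_le_nth_of_subset (subset_insert _ _) hj1 (by omega)
      _ ≤ nth F j := hle j hj1 (by omega)
      _ ≤ nth (insert a F) j := nth_le_nth_insert_of_lt hj1 (by omega)
          ((nth_lt_nth_s9 hj1 hjq (by omega : q ≤ #(insert a F))).trans_eq hF)
  · rw [hE, hF]
  · calc nth (insert b E) j ≤ nth F (j - 1) := hmax j hqj (by omega)
      _ ≤ nth (insert a F) j := nth_sub_one_le_nth_insert (by omega) (by omega)

theorem stmt9_general (t : ℕ) (A B : Finset ℕ)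
    (hAc : A.card = t) (hBc : B.card = t) (hdom : Dom A B)
    (γ : ℕ) (hγA : γ ∉ A)
    (q : ℕ) (hq1 : 1 ≤ q) (hq2 : q ≤ t + 1)
    -- q satisfies the defining property (with the convention b̃_0 = 0, the case q = 1
    -- holds vacuously):
    (hqP : q = 1 ∨ nth (insert γ A) q > nth B (q - 1))
    -- q is the largest with this property:
    (hqmax : ∀ r, q < r → r ≤ t + 1 → nth (insert γ A) r ≤ nth B (r - 1)) :
    nth (insert γ A) q ∉ B ∧
    nth (insert γ A) q ≤ γ ∧
    Dom (insert γ A) (insert (nth (insert γ A) q) B) ∧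
    level (nth (insert γ A) q) (insert γ A) =
      level (nth (insert γ A) q) (insert (nth (insert γ A) q) B) := by
  set α := nth (insert γ A) q
  have hA' : #(insert γ A) = t + 1 := by rw [card_insert_of_notMem hγA, hAc]
  have hlo : 2 ≤ q → nth B (q - 1) < α := fun h => hqP.resolve_left (by omega)
  have hhi : q ≤ #B → α < nth B q := fun h =>
    (nth_lt_nth_s9 hq1 (lt_add_one q) (by omega)).trans_le (hqmax (q + 1) (by omega) (by omega))
  have hαB : α ∉ B := notMem_of_between hq1 (by omega) hlo hhi
  have hB' : nth (insert α B) q = α := nth_insert_eq_of_between hq1 (by omega) hlo hhi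
  refine ⟨hαB, ?_, ?_, ?_⟩
  · refine nth_insert_le_of_nth_sub_one_lt hγA hq1 (by omega) fun h => ?_
    exact ((dom_iff.1 hdom).2 (q - 1) (by omega) (by omega)).trans_lt (hlo h)
  · exact hdom.insert_insert hγA hαB hq1 (by omega) rfl hB' (by rwa [hAc])
  · rw [level_nth_s9 hq1 (by omega)]
    nth_rewrite 1 [← hB']
    rw [level_nth_s9 hq1 (by rw [card_insert_of_notMem hαB]; omega)]

theorem stmt9 (n t : ℕ) (A B : Finset ℕ) (hAs : A ⊆ Finset.Icc 1 n) (hBs : B ⊆ Finset.Icc 1 n)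
    (hAc : A.card = t) (hBc : B.card = t) (hdom : Dom A B)
    (γ : ℕ) (hγ : γ ∈ Finset.Icc 1 n) (hγA : γ ∉ A)
    (q : ℕ) (hq1 : 1 ≤ q) (hq2 : q ≤ t + 1)
    -- q satisfies the defining property (with the convention b̃_0 = 0, the case q = 1
    -- holds vacuously):
    (hqP : q = 1 ∨ nth (insert γ A) q > nth B (q - 1))
    -- q is the largest with this property:
    (hqmax : ∀ r, q < r → r ≤ t + 1 → nth (insert γ A) r ≤ nth B (r - 1)) :
    nth (insert γ A) q ∉ B ∧
    nth (insert γ A) q ≤ γ ∧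
    Dom (insert γ A) (insert (nth (insert γ A) q) B) ∧
    level (nth (insert γ A) q) (insert γ A) =
      level (nth (insert γ A) q) (insert (nth (insert γ A) q) B) :=
  stmt9_general t A B hAc hBc hdom γ hγA q hq1 hq2 hqP hqmax
end

section
/- Fix p ≤ n, a p-element subset Y = {y_1 < ... < y_p} of [n], and a permutation w of [n] with one-line notation w_1...w_n such that Y ≤ {w_1,...,w_p}. Define σ_1,...,σ_p recursively by: σ_j is the maximum element of Y \ {σ_1,...,σ_{j-1}} not exceeding w_j. Then σ_j is well-defined for every j = 1,...,p; that is, at each step j the set {y ∈ Y \ {σ_1,...,σ_{j-1}} : y ≤ w_j} is nonempty. -/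
/-!
Think of `σ` as a greedy matching of the positions `1, …, p` into `Y`. The invariant is Hall's
condition for what is left to match: before step `m`, for every threshold `x`, the positions
`k ∈ [m, p]` with `w k ≤ x` are at most as many as the unused elements of `Y` below `x`.
Dominance gives this condition for `m = 1`, and choosing the largest admissible element
preserves it. At `m = j` and `x = w j` the left side contains `j`, so the right side is nonempty.
-/

open Finset

section Greedy

variable {α ι : Type*} [LinearOrder α]

theorem List.countP_le_countP_of_forall₂_le (x : α) {L M : List α}
    (h : List.Forall₂ (· ≤ ·) L M) : M.countP (· ≤ x) ≤ L.countP (· ≤ x) := by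
  induction h with
  | nil => simp
  | @cons a b L M hab _ ih =>
    simp only [List.countP_cons]
    have : (if decide (b ≤ x) then 1 else 0) ≤ (if decide (a ≤ x) then 1 else 0) := by
      by_cases hb : b ≤ x <;> simp [hb, hab.trans]
    omega

theorem Finset.card_filter_le_eq_countP_sort (E : Finset α) (x : α) :
    #(E.filter (· ≤ x)) = (E.sort (· ≤ ·)).countP (· ≤ x) := by
  rw [← Multiset.coe_countP, Finset.sort_eq, Multiset.countP_eq_card_filter]
  rfl

theorem Dom.card_filter_le {E F : Finset ℕ} (h : Dom E F) (x : ℕ) :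
    #(F.filter (· ≤ x)) ≤ #(E.filter (· ≤ x)) := by
  rw [card_filter_le_eq_countP_sort, card_filter_le_eq_countP_sort]
  exact List.countP_le_countP_of_forall₂_le x h

theorem card_filter_erase_le_of_max_eq [DecidableEq ι] {R : Finset α} {K : Finset ι}
    {f : ι → α} {m : ι} {s : α} (hm : m ∈ K) (hs : (R.filter (· ≤ f m)).max = s)
    (hRK : ∀ x, #(K.filter (f · ≤ x)) ≤ #(R.filter (· ≤ x))) (x : α) :
    #((K.erase m).filter (f · ≤ x)) ≤ #((R.erase s).filter (· ≤ x)) := by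
  have hsmem : s ∈ R.filter (· ≤ f m) := mem_of_max hs
  have hsR : s ∈ R := (mem_filter.mp hsmem).1
  have hsf : s ≤ f m := (mem_filter.mp hsmem).2
  rw [filter_erase, filter_erase]
  rcases le_or_gt (f m) x with hfx | hxf
  · have hmx : m ∈ K.filter (f · ≤ x) := mem_filter.mpr ⟨hm, hfx⟩
    have hsx : s ∈ R.filter (· ≤ x) := mem_filter.mpr ⟨hsR, hsf.trans hfx⟩
    rw [card_erase_of_mem hmx, card_erase_of_mem hsx]
    exact Nat.sub_le_sub_right (hRK x) 1
  rcases lt_or_ge x s with hxs | hsx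
  · have hsx : s ∉ R.filter (· ≤ x) := fun h => (mem_filter.mp h).2.not_gt hxs
    rw [erase_eq_of_notMem hsx]
    exact card_erase_le.trans (hRK x)
  · -- every `y ∈ R` with `y ≤ f m` lies below `s ≤ x`, so both thresholds cut out the same set
    have hcut : R.filter (· ≤ x) = R.filter (· ≤ f m) := by
      ext y
      simp only [mem_filter, and_congr_right_iff]
      exact fun hy => ⟨fun hyx => hyx.trans hxf.le,
        fun hyf => (le_max_of_eq (mem_filter.mpr ⟨hy, hyf⟩) hs).trans hsx⟩
    have hmono : (K.filter (f · ≤ x)).erase m ⊆ (K.filter (f · ≤ f m)).erase m :=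
      erase_subset_erase _ (monotone_filter_right _ fun _ _ h => h.trans hxf.le)
    calc #((K.filter (f · ≤ x)).erase m)
        ≤ #((K.filter (f · ≤ f m)).erase m) := card_le_card hmono
      _ = #(K.filter (f · ≤ f m)) - 1 := card_erase_of_mem (mem_filter.mpr ⟨hm, le_rfl⟩)
      _ ≤ #(R.filter (· ≤ f m)) - 1 := Nat.sub_le_sub_right (hRK (f m)) 1
      _ = #((R.filter (· ≤ x)).erase s) := by rw [hcut, card_erase_of_mem hsmem]

end Greedy

theorem card_filter_le_card_sdiff_image_of_greedy {w σ : ℕ → ℕ} {Y : Finset ℕ} {p j : ℕ}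
    (hjp : j ≤ p)
    (hσ : ∀ k, 1 ≤ k → k < j →
      ((Y \ ((Icc 1 (k - 1)).image σ)).filter (fun y => y ≤ w k)).max = (σ k : WithBot ℕ))
    (hY : ∀ x, #((Icc 1 p).filter (w · ≤ x)) ≤ #(Y.filter (· ≤ x))) :
    ∀ m, 1 ≤ m → m ≤ j → ∀ x,
      #((Icc m p).filter (w · ≤ x)) ≤ #((Y \ (Icc 1 (m - 1)).image σ).filter (· ≤ x)) := by
  intro m hm
  induction m, hm using Nat.le_induction with
  | base => simpa using fun _ => hY
  | succ m hm ih =>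
    intro hmj
    have hused : Icc 1 (m + 1 - 1) = insert m (Icc 1 (m - 1)) := by
      ext k; simp only [mem_Icc, mem_insert]; omega
    have hleft : Icc (m + 1) p = (Icc m p).erase m := by
      ext k; simp only [mem_Icc, mem_erase]; omega
    rw [hused, image_insert, sdiff_insert, hleft]
    exact card_filter_erase_le_of_max_eq (mem_Icc.mpr ⟨le_rfl, by omega⟩) (hσ m hm hmj)
      (ih (Nat.le_of_succ_le hmj))

theorem stmt10_general (n p : ℕ) (hp : p ≤ n) (w σ : ℕ → ℕ)
    -- w is a permutation of [n], given by its one-line notation on {1,...,n}: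
    (hw : Set.BijOn w (Set.Icc 1 n) (Set.Icc 1 n))
    (Y : Finset ℕ)
    -- Y ≤ {w_1,...,w_p}:
    (hdom : Dom Y ((Finset.Icc 1 p).image w)) :
    -- if σ_1, ..., σ_{j-1} have been chosen by the rule, then the set from which σ_j is to be
    -- chosen as the maximum is nonempty:
    ∀ j, 1 ≤ j → j ≤ p →
      (∀ k, 1 ≤ k → k < j →
        ((Y \ ((Finset.Icc 1 (k - 1)).image σ)).filter (fun y => y ≤ w k)).max = (σ k : WithBot ℕ)) →
      ((Y \ ((Finset.Icc 1 (j - 1)).image σ)).filter (fun y => y ≤ w j)).Nonempty := by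
  intro j hj hjp hσ
  have hinj : Set.InjOn w (Icc 1 p : Finset ℕ) := by
    rw [coe_Icc]; exact hw.injOn.mono (Set.Icc_subset_Icc_right hp)
  have hY : ∀ x, #((Icc 1 p).filter (w · ≤ x)) ≤ #(Y.filter (· ≤ x)) := fun x => by
    have := hdom.card_filter_le x
    rwa [filter_image, card_image_of_injOn (hinj.mono (filter_subset _ _))] at this
  have hpos : 0 < #((Icc j p).filter (w · ≤ w j)) :=
    card_pos.mpr ⟨j, mem_filter.mpr ⟨mem_Icc.mpr ⟨le_rfl, hjp⟩, le_rfl⟩⟩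
  exact card_pos.mp (hpos.trans_le
    (card_filter_le_card_sdiff_image_of_greedy hjp hσ hY j hj le_rfl (w j)))

theorem stmt10 (n p : ℕ) (hp : p ≤ n) (w σ : ℕ → ℕ)
    -- w is a permutation of [n], given by its one-line notation on {1,...,n}:
    (hw : Set.BijOn w (Set.Icc 1 n) (Set.Icc 1 n))
    (Y : Finset ℕ) (hYs : Y ⊆ Finset.Icc 1 n) (hYc : Y.card = p)
    -- Y ≤ {w_1,...,w_p}:
    (hdom : Dom Y ((Finset.Icc 1 p).image w)) :
    -- if σ_1, ..., σ_{j-1} have been chosen by the rule, then the set from which σ_j is to be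
    -- chosen as the maximum is nonempty:
    ∀ j, 1 ≤ j → j ≤ p →
      (∀ k, 1 ≤ k → k < j →
        ((Y \ ((Finset.Icc 1 (k - 1)).image σ)).filter (fun y => y ≤ w k)).max = (σ k : WithBot ℕ)) →
      ((Y \ ((Finset.Icc 1 (j - 1)).image σ)).filter (fun y => y ≤ w j)).Nonempty :=
  stmt10_general n p hp w σ hw Y hdom
end

section
/- With the recursive definition σ_j := max{y ∈ Y \ {σ_1,...,σ_{j-1}} : y ≤ w_j} (for 1 ≤ j ≤ p, under the hypothesis Y ≤ {w_1,...,w_p}), for any i ≤ p and any y ∈ Y \ {σ_1,...,σ_{i-1}}: (1) σ_i ≤ w_i; (2) σ_i < y if and only if w_i < y; (3) |{k ≤ i : w_k ≤ y-1}| = |{k ≤ i : σ_k ≤ y-1}|. -/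
/-!
Each claim is about a single step of the recursion. Since `σ_k` is the largest available element
not exceeding `w_k`, an element `y` still available at step `k` satisfies `σ_k < y ↔ w_k < y`.
An element available at step `i` is available at every earlier step `k ≤ i`, so the indices
`k ≤ i` with `w_k < y` and with `σ_k < y` coincide; as `w` and `σ` are injective on `[1, i]`,
the two value sets have the same size.
-/

open Finset

section MaxBelow

variable {α : Type*} [LinearOrder α] {s : Finset α} {a b : α}

theorem mem_and_le_of_max_filter_le_eq (h : (s.filter (· ≤ b)).max = a) : a ∈ s ∧ a ≤ b :=
  mem_filter.mp (mem_of_max h)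

theorem lt_iff_lt_of_max_filter_le_eq (h : (s.filter (· ≤ b)).max = a) {y : α} (hy : y ∈ s) :
    a < y ↔ b < y := by
  refine ⟨fun hay => lt_of_not_ge fun hyb => ?_, (mem_and_le_of_max_filter_le_eq h).2.trans_lt⟩
  exact (le_max_of_eq (mem_filter.mpr ⟨hy, hyb⟩) h).not_gt hay

end MaxBelow

theorem injOn_Icc_of_notMem_image_Icc_pred {f : ℕ → ℕ} {p : ℕ}
    (hf : ∀ j ∈ Icc 1 p, f j ∉ (Icc 1 (j - 1)).image f) : Set.InjOn f (Icc 1 p) := by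
  have key : ∀ a ∈ Icc 1 p, ∀ b ∈ Icc 1 p, a < b → f a ≠ f b := fun a ha b hb hab hfab =>
    hf b hb (mem_image.mpr ⟨a, by simp only [mem_Icc] at ha ⊢; omega, hfab⟩)
  intro a ha b hb hfab
  rcases lt_trichotomy a b with hab | hab | hab
  · exact absurd hfab (key a ha b hb hab)
  · exact hab
  · exact absurd hfab.symm (key b hb a ha hab)

theorem card_filter_image_of_injOn {α β : Type*} [DecidableEq β] {f : α → β} {s : Finset α}
    {q : β → Prop} [DecidablePred q] (hf : Set.InjOn f s) :
    ((s.image f).filter q).card = (s.filter fun k => q (f k)).card := by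
  rw [filter_image]
  exact card_image_of_injOn (hf.mono (filter_subset _ s))

theorem stmt11_general (n p : ℕ) (hp : p ≤ n) (w σ : ℕ → ℕ)
    (hw : Set.BijOn w (Set.Icc 1 n) (Set.Icc 1 n))
    (Y : Finset ℕ) (hYs : Y ⊆ Finset.Icc 1 n)
    -- σ_j is the maximum element of Y \ {σ_1,...,σ_{j-1}} not exceeding w_j:
    (hσ : ∀ j, 1 ≤ j → j ≤ p →
      ((Y \ ((Finset.Icc 1 (j - 1)).image σ)).filter (fun y => y ≤ w j)).max = (σ j : WithBot ℕ)) :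
    ∀ i, 1 ≤ i → i ≤ p → ∀ y ∈ Y \ ((Finset.Icc 1 (i - 1)).image σ),
      σ i ≤ w i ∧
      (σ i < y ↔ w i < y) ∧
      ((((Finset.Icc 1 i).image w).filter (fun x => x ≤ y - 1)).card =
        (((Finset.Icc 1 i).image σ).filter (fun x => x ≤ y - 1)).card) := by
  have hσ_inj : Set.InjOn σ (Icc 1 p) := injOn_Icc_of_notMem_image_Icc_pred fun j hj => by
    simp only [mem_Icc] at hj
    exact (mem_sdiff.mp (mem_and_le_of_max_filter_le_eq (hσ j hj.1 hj.2)).1).2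
  have hw_inj : Set.InjOn w (Icc 1 p) :=
    hw.injOn.mono fun k hk => by simp only [coe_Icc, Set.mem_Icc] at hk ⊢; omega
  intro i hi hip y hy
  have hy1 : 1 ≤ y := (mem_Icc.mp (hYs (mem_sdiff.mp hy).1)).1
  have hIcc : (Icc 1 i : Set ℕ) ⊆ Icc 1 p := coe_subset.mpr (Icc_subset_Icc_right hip)
  have h_same_indices : ∀ k ∈ Icc 1 i, w k ≤ y - 1 ↔ σ k ≤ y - 1 := fun k hk => by
    simp only [mem_Icc] at hk
    have hy_avail : y ∈ Y \ (Icc 1 (k - 1)).image σ :=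
      sdiff_subset_sdiff subset_rfl (image_subset_image (Icc_subset_Icc_right (by omega))) hy
    rw [Nat.le_sub_one_iff_lt hy1, Nat.le_sub_one_iff_lt hy1]
    exact (lt_iff_lt_of_max_filter_le_eq (hσ k hk.1 (hk.2.trans hip)) hy_avail).symm
  refine ⟨(mem_and_le_of_max_filter_le_eq (hσ i hi hip)).2,
    lt_iff_lt_of_max_filter_le_eq (hσ i hi hip) hy, ?_⟩
  rw [card_filter_image_of_injOn (hw_inj.mono hIcc), card_filter_image_of_injOn (hσ_inj.mono hIcc),
    filter_congr h_same_indices]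

theorem stmt11 (n p : ℕ) (hp : p ≤ n) (w σ : ℕ → ℕ)
    (hw : Set.BijOn w (Set.Icc 1 n) (Set.Icc 1 n))
    (Y : Finset ℕ) (hYs : Y ⊆ Finset.Icc 1 n) (hYc : Y.card = p)
    (hdom : Dom Y ((Finset.Icc 1 p).image w))
    -- σ_j is the maximum element of Y \ {σ_1,...,σ_{j-1}} not exceeding w_j:
    (hσ : ∀ j, 1 ≤ j → j ≤ p →
      ((Y \ ((Finset.Icc 1 (j - 1)).image σ)).filter (fun y => y ≤ w j)).max = (σ j : WithBot ℕ)) :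
    ∀ i, 1 ≤ i → i ≤ p → ∀ y ∈ Y \ ((Finset.Icc 1 (i - 1)).image σ),
      σ i ≤ w i ∧
      (σ i < y ↔ w i < y) ∧
      ((((Finset.Icc 1 i).image w).filter (fun x => x ≤ y - 1)).card =
        (((Finset.Icc 1 i).image σ).filter (fun x => x ≤ y - 1)).card) :=
  stmt11_general n p hp w σ hw Y hYs hσ
end

section
/- Let σ be the output of the Deodhar maximal lift procedure with inputs p, Y, and w (with Y ≤ {w_1,...,w_p}). Then for each i with p < i ≤ n: (1) w_i ≤ σ_i; (2) {σ_1,...,σ_i} ≤ {w_1,...,w_i}; (3) σ_i belongs to {w_1,...,w_i} and has the same level (rank in increasing order) in {σ_1,...,σ_i} as in {w_1,...,w_i}; (4) for any j ≥ i, σ_i belongs to {w_1,...,w_j} and has the same level in {σ_1,...,σ_j} as in {w_1,...,w_j}; (5) if j > i and w_j < σ_i, then σ_j < σ_i. -/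
/-- The Bruhat order, via the tableau criterion, on permutations of `[n] = {1,...,n}`
given in one-line notation as functions `ℕ → ℕ`. -/
def Bruhat (n : ℕ) (v w : ℕ → ℕ) : Prop :=
  ∀ i ≤ n, Dom ((Finset.Icc 1 i).image v) ((Finset.Icc 1 i).image w)

open Finset

namespace DeodharLift

def countLt (E : Finset ℕ) (e : ℕ) : ℕ := #{x ∈ E | x < e}

section Counting

variable {E F : Finset ℕ} {e x k : ℕ}

lemma countLt_mono {e e' : ℕ} (h : e ≤ e') : countLt E e ≤ countLt E e' :=
  card_le_card (monotone_filter_right E fun _ _ hx => lt_of_lt_of_le hx h)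

lemma countLt_le_card : countLt E e ≤ #E := card_filter_le _ _

lemma countLt_lt_card (he : e ∈ E) : countLt E e < #E :=
  card_lt_card (filter_ssubset.mpr ⟨e, he, lt_irrefl e⟩)

lemma countLt_insert_of_le (h : e ≤ x) : countLt (insert x E) e = countLt E e := by
  rw [countLt, filter_insert, if_neg h.not_gt]; rfl

lemma countLt_insert_of_lt (hx : x ∉ E) (h : x < e) : countLt (insert x E) e = countLt E e + 1 := by
  rw [countLt, filter_insert, if_pos h, card_insert_of_notMem fun hm => hx (mem_filter.mp hm).1]
  rfl

lemma countLt_add_one_le_of_lt (hx : x ∈ E) (h : x < e) : countLt E x + 1 ≤ countLt E e := by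
  have hsub : insert x {y ∈ E | y < x} ⊆ {y ∈ E | y < e} :=
    insert_subset (mem_filter.mpr ⟨hx, h⟩) (monotone_filter_right E fun _ _ hy => hy.trans h)
  calc countLt E x + 1 = #(insert x {y ∈ E | y < x}) := (card_insert_of_notMem (by simp)).symm
    _ ≤ countLt E e := card_le_card hsub

lemma countLt_eq_level (hx : x ∈ E) : countLt E x = level x E := by
  set f := E.orderIsoOfFin rfl
  have hfilter :
      {y ∈ E | y < x} = (Iio (f.symm ⟨x, hx⟩)).map (E.orderEmbOfFin rfl).toEmbedding := by
    ext y
    simp only [mem_filter, mem_map, mem_Iio]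
    constructor
    · rintro ⟨hy, hyx⟩
      refine ⟨f.symm ⟨y, hy⟩, f.symm.strictMono hyx, ?_⟩
      rw [RelEmbedding.coe_toEmbedding, ← coe_orderIsoOfFin_apply, OrderIso.apply_symm_apply]
    · rintro ⟨i, hi, rfl⟩
      refine ⟨orderEmbOfFin_mem E rfl i, ?_⟩
      have := f.strictMono hi
      rwa [OrderIso.apply_symm_apply, ← Subtype.coe_lt_coe, coe_orderIsoOfFin_apply] at this
  rw [countLt, hfilter, card_map, Fin.card_Iio, orderIsoOfFin_symm_apply]
  rfl

lemma nth_eq_getElem (h1 : 1 ≤ k) (h2 : k ≤ #E) :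
    nth E k = (E.sort (· ≤ ·))[k - 1]'(by rw [length_sort]; omega) :=
  List.getD_eq_getElem _ _ _

lemma nth_mem (h1 : 1 ≤ k) (h2 : k ≤ #E) : nth E k ∈ E := by
  rw [nth_eq_getElem h1 h2, ← mem_sort (· ≤ ·)]
  exact List.getElem_mem _

lemma level_nth (h1 : 1 ≤ k) (h2 : k ≤ #E) : level (nth E k) E = k - 1 := by
  rw [nth_eq_getElem h1 h2, level]
  exact List.get_idxOf (sort_nodup E _) ⟨k - 1, _⟩

lemma nth_level_add_one (hx : x ∈ E) : nth E (level x E + 1) = x := by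
  rw [nth, Nat.add_sub_cancel, level,
    List.getD_eq_getElem _ _ (List.idxOf_lt_length_of_mem ((mem_sort _).mpr hx))]
  exact List.getElem_idxOf _

lemma countLt_nth (h1 : 1 ≤ k) (h2 : k ≤ #E) : countLt E (nth E k) = k - 1 := by
  rw [countLt_eq_level (nth_mem h1 h2), level_nth h1 h2]

lemma nth_countLt_add_one (hx : x ∈ E) : nth E (countLt E x + 1) = x := by
  rw [countLt_eq_level hx, nth_level_add_one hx]

lemma nth_lt_iff_le_countLt (h1 : 1 ≤ k) (h2 : k ≤ #E) : nth E k < e ↔ k ≤ countLt E e := by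
  constructor
  · intro hlt
    have := countLt_add_one_le_of_lt (nth_mem h1 h2) hlt
    rw [countLt_nth h1 h2] at this
    omega
  · intro hle
    by_contra! hge
    have := countLt_mono (E := E) hge
    rw [countLt_nth h1 h2] at this
    omega

lemma dom_iff_nth_le (h : #E = #F) : Dom E F ↔ ∀ k, 1 ≤ k → k ≤ #F → nth E k ≤ nth F k := by
  simp only [Dom, List.forall₂_iff_get, List.get_eq_getElem, length_sort]
  refine ⟨fun ⟨_, hle⟩ k h1 h2 => ?_, fun hle => ⟨h, fun i hiE hiF => ?_⟩⟩
  · rw [nth_eq_getElem h1 (h ▸ h2), nth_eq_getElem h1 h2]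
    exact hle _ (by omega) (by omega)
  · have := hle (i + 1) (by omega) (by omega)
    rwa [nth_eq_getElem (by omega) (by omega), nth_eq_getElem (by omega) (by omega)] at this

lemma dom_iff_countLt_le (h : #E = #F) : Dom E F ↔ ∀ e, countLt F e ≤ countLt E e := by
  rw [dom_iff_nth_le h]
  constructor
  · intro hle e
    obtain h0 | hpos := Nat.eq_zero_or_pos (countLt F e)
    · omega
    have hF := countLt_le_card (E := F) (e := e)
    have hlt : nth F (countLt F e) < e := (nth_lt_iff_le_countLt hpos hF).mpr le_rfl
    exact (nth_lt_iff_le_countLt hpos (h ▸ hF)).mp ((hle _ hpos hF).trans_lt hlt)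
  · intro hle k h1 h2
    by_contra! hlt
    have := (nth_lt_iff_le_countLt h1 h2).mp hlt
    have := hle (nth E k)
    rw [countLt_nth h1 (h ▸ h2)] at this
    omega

end Counting

/-- `q` is the first position at which `B` exceeds `C`, where `B` is padded by `nth B (#B + 1) = ∞`
(hence the guard `q ≤ #B` in `exceeds`). -/
structure IsLeastExceedance (B C : Finset ℕ) (q : ℕ) : Prop where
  one_le : 1 ≤ q
  le_card : q ≤ #C
  le_card_add_one : q ≤ #B + 1
  exceeds : q ≤ #B → nth C q < nth B q
  least : ∀ r, 1 ≤ r → r < q → nth B r ≤ nth C r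

namespace IsLeastExceedance

variable {A B C : Finset ℕ} {q γ b e : ℕ}

lemma countLt_le_of_le_nth (h : IsLeastExceedance B C q) (he : e ≤ nth C q) :
    countLt C e ≤ countLt B e := by
  set c := countLt C e
  obtain hc | hc := Nat.eq_zero_or_pos c
  · omega
  have hcq : c < q := by
    by_contra! hqc
    exact he.not_gt ((nth_lt_iff_le_countLt h.one_le h.le_card).mpr hqc)
  have hCe : nth C c < e := (nth_lt_iff_le_countLt hc countLt_le_card).mpr le_rfl
  have hBC := h.least c hc hcq
  exact (nth_lt_iff_le_countLt hc (by have := h.le_card_add_one; omega)).mp (hBC.trans_lt hCe)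

lemma countLt_nth_eq (h : IsLeastExceedance B C q) : countLt B (nth C q) = q - 1 := by
  have hlow := h.countLt_le_of_le_nth le_rfl
  rw [countLt_nth h.one_le h.le_card] at hlow
  have hup : countLt B (nth C q) < q := by
    by_contra! hq
    have hqB : q ≤ #B := hq.trans countLt_le_card
    exact (h.exceeds hqB).not_gt ((nth_lt_iff_le_countLt h.one_le hqB).mpr hq)
  omega

lemma nth_notMem (h : IsLeastExceedance B C q) : nth C q ∉ B := by
  intro hmem
  have hcount := h.countLt_nth_eq
  have hqB : q ≤ #B := by have := countLt_lt_card hmem; omega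
  have hnth := nth_countLt_add_one hmem
  rw [hcount, Nat.sub_add_cancel h.one_le] at hnth
  exact (h.exceeds hqB).ne hnth.symm

lemma nth_lt_of_countLt_lt (h : IsLeastExceedance B C q) (hb : b ∈ B)
    (hlt : countLt B b < countLt C b) : nth C q < b := by
  set m := countLt B b
  suffices hq : q ≤ m + 1 from
    (nth_lt_iff_le_countLt h.one_le h.le_card).mpr (by omega)
  by_contra! hmq
  have hCb : nth C (m + 1) < b :=
    (nth_lt_iff_le_countLt (by omega) (by have := h.le_card; omega)).mpr hlt
  have hBC := h.least (m + 1) (by omega) hmq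
  rw [nth_countLt_add_one hb] at hBC
  exact hBC.not_gt hCb

lemma le_nth_insert (h : IsLeastExceedance B (insert γ A) q) (hAB : #A = #B)
    (hdom : ∀ e, countLt A e ≤ countLt B e) : γ ≤ nth (insert γ A) q := by
  set s := nth (insert γ A) q
  by_contra! hsγ
  have hsA : s ∈ A :=
    (mem_insert.mp (nth_mem h.one_le h.le_card)).resolve_left hsγ.ne
  have hcount : countLt A s = q - 1 := by
    rw [← countLt_insert_of_le (x := γ) hsγ.le, countLt_nth h.one_le h.le_card]
  have hqA : q ≤ #A := by have := countLt_lt_card hsA; omega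
  have hnth : nth A q = s := by
    rw [← nth_countLt_add_one hsA, hcount, Nat.sub_add_cancel h.one_le]
  have hBA := (dom_iff_nth_le hAB.symm).mp ((dom_iff_countLt_le hAB.symm).mpr hdom) q h.one_le hqA
  rw [hnth] at hBA
  exact (h.exceeds (hAB ▸ hqA)).not_ge hBA

lemma countLt_le_countLt_insert (h : IsLeastExceedance B (insert γ A) q) (hγ : γ ∉ A)
    (hγs : γ ≤ nth (insert γ A) q) (hdom : ∀ e, countLt A e ≤ countLt B e) (e : ℕ) :
    countLt (insert γ A) e ≤ countLt (insert (nth (insert γ A) q) B) e := by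
  obtain hes | hse := le_or_gt e (nth (insert γ A) q)
  · rw [countLt_insert_of_le hes]
    exact h.countLt_le_of_le_nth hes
  · rw [countLt_insert_of_lt hγ (hγs.trans_lt hse), countLt_insert_of_lt h.nth_notMem hse]
    exact Nat.add_le_add_right (hdom e) 1

end IsLeastExceedance

def initImage (f : ℕ → ℕ) (k : ℕ) : Finset ℕ := (Icc 1 k).image f

section InitImage

variable {f : ℕ → ℕ} {i k : ℕ}

lemma initImage_succ (f : ℕ → ℕ) (k : ℕ) :
    initImage f (k + 1) = insert (f (k + 1)) (initImage f k) := by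
  rw [initImage, ← insert_Icc_right_eq_Icc_add_one (by omega), image_insert]; rfl

lemma apply_mem_initImage (h1 : 1 ≤ i) (hik : i ≤ k) : f i ∈ initImage f k :=
  mem_image_of_mem f (mem_Icc.mpr ⟨h1, hik⟩)

lemma card_initImage (hf : Set.InjOn f (Set.Icc 1 k)) : #(initImage f k) = k := by
  rw [initImage, card_image_of_injOn (by rwa [coe_Icc]), Nat.card_Icc, Nat.add_sub_cancel]

lemma apply_succ_notMem_initImage (hf : Set.InjOn f (Set.Icc 1 (k + 1))) :
    f (k + 1) ∉ initImage f k := by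
  simp only [initImage, mem_image, mem_Icc, not_exists, not_and]
  intro i hi hfi
  have := hf ⟨hi.1, by omega⟩ ⟨by omega, le_rfl⟩ hfi
  omega

lemma initImage_eq_of_mem_sdiff {Y : Finset ℕ} {p : ℕ} (hY : #Y = p)
    (hσ : ∀ j, 1 ≤ j → j ≤ p → f j ∈ Y \ initImage f (j - 1)) : initImage f p = Y := by
  have key : ∀ j ≤ p, initImage f j ⊆ Y ∧ #(initImage f j) = j := by
    intro j
    induction j with
    | zero => simp [initImage]
    | succ j ih =>
      intro hj
      obtain ⟨hsub, hcard⟩ := ih (by omega)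
      have hmem := mem_sdiff.mp (hσ (j + 1) (by omega) hj)
      rw [Nat.add_sub_cancel] at hmem
      rw [initImage_succ]
      exact ⟨insert_subset hmem.1 hsub, by rw [card_insert_of_notMem hmem.2, hcard]⟩
  obtain ⟨hsub, hcard⟩ := key p le_rfl
  exact eq_of_subset_of_card_le hsub (by rw [hY, hcard])

end InitImage

def MaxLiftStep (w σ : ℕ → ℕ) (j : ℕ) : Prop :=
  ∃ q, 1 ≤ q ∧ q ≤ j ∧
    (q ≤ j - 1 → nth (initImage w j) q < nth (initImage σ (j - 1)) q) ∧
    (∀ r, 1 ≤ r → r < q → nth (initImage σ (j - 1)) r ≤ nth (initImage w j) r) ∧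
    σ j = nth (initImage w j) q

structure LiftInvariant (w σ : ℕ → ℕ) (p k : ℕ) : Prop where
  card_eq : #(initImage σ k) = k
  countLt_le : ∀ e, countLt (initImage w k) e ≤ countLt (initImage σ k) e
  mem_countLt_eq : ∀ i, p < i → i ≤ k →
    σ i ∈ initImage w k ∧ countLt (initImage σ k) (σ i) = countLt (initImage w k) (σ i)

section Lift

variable {w σ : ℕ → ℕ} {n p i k : ℕ}

lemma MaxLiftStep.exists_isLeastExceedance (hstep : MaxLiftStep w σ (k + 1))
    (hinj : Set.InjOn w (Set.Icc 1 (k + 1))) (hσ : #(initImage σ k) = k) :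
    ∃ q, IsLeastExceedance (initImage σ k) (initImage w (k + 1)) q ∧
      σ (k + 1) = nth (initImage w (k + 1)) q := by
  obtain ⟨q, hq1, hqk, hexceeds, hleast, hσq⟩ := hstep
  rw [Nat.add_sub_cancel] at hexceeds hleast
  exact ⟨q, ⟨hq1, by rwa [card_initImage hinj], by omega, by rwa [hσ], hleast⟩, hσq⟩

namespace LiftInvariant

lemma apply_succ_le (hinv : LiftInvariant w σ p k) (hinj : Set.InjOn w (Set.Icc 1 (k + 1)))
    (hstep : MaxLiftStep w σ (k + 1)) : w (k + 1) ≤ σ (k + 1) := by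
  obtain ⟨q, hq, hσq⟩ := hstep.exists_isLeastExceedance hinj hinv.card_eq
  rw [hσq]
  rw [initImage_succ] at hq ⊢
  refine hq.le_nth_insert ?_ hinv.countLt_le
  rw [hinv.card_eq, card_initImage (hinj.mono (Set.Icc_subset_Icc_right k.le_succ))]

lemma apply_succ_lt (hinv : LiftInvariant w σ p k) (hinj : Set.InjOn w (Set.Icc 1 (k + 1)))
    (hstep : MaxLiftStep w σ (k + 1)) (hpi : p < i) (hik : i ≤ k) (hlt : w (k + 1) < σ i) :
    σ (k + 1) < σ i := by
  obtain ⟨q, hq, hσq⟩ := hstep.exists_isLeastExceedance hinj hinv.card_eq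
  obtain ⟨-, hcount⟩ := hinv.mem_countLt_eq i hpi hik
  rw [hσq]
  refine hq.nth_lt_of_countLt_lt (apply_mem_initImage (by omega) hik) ?_
  rw [initImage_succ, countLt_insert_of_lt (apply_succ_notMem_initImage hinj) hlt, hcount]
  exact Nat.lt_add_one _

lemma succ (hinv : LiftInvariant w σ p k) (hinj : Set.InjOn w (Set.Icc 1 (k + 1)))
    (hstep : MaxLiftStep w σ (k + 1)) : LiftInvariant w σ p (k + 1) := by
  have hγ := apply_succ_notMem_initImage hinj
  have hγs := hinv.apply_succ_le hinj hstep
  obtain ⟨q, hq, hσq⟩ := hstep.exists_isLeastExceedance hinj hinv.card_eq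
  rw [initImage_succ w] at hq hσq
  have hs : σ (k + 1) ∉ initImage σ k := hσq ▸ hq.nth_notMem
  refine ⟨?_, fun e => ?_, fun i hpi hik => ?_⟩
  · rw [initImage_succ, card_insert_of_notMem hs, hinv.card_eq]
  · rw [initImage_succ, initImage_succ, hσq]
    exact hq.countLt_le_countLt_insert hγ (hσq ▸ hγs) hinv.countLt_le e
  obtain rfl | hik := eq_or_lt_of_le hik
  · refine ⟨by rw [initImage_succ, hσq]; exact nth_mem hq.one_le hq.le_card, ?_⟩
    rw [initImage_succ σ, countLt_insert_of_le le_rfl, initImage_succ w, hσq, hq.countLt_nth_eq,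
      countLt_nth hq.one_le hq.le_card]
  obtain ⟨hmem, hcount⟩ := hinv.mem_countLt_eq i hpi (by omega)
  refine ⟨by rw [initImage_succ]; exact mem_insert_of_mem hmem, ?_⟩
  rw [initImage_succ, initImage_succ]
  obtain hlt | hle := lt_or_ge (w (k + 1)) (σ i)
  · rw [countLt_insert_of_lt hs (hinv.apply_succ_lt hinj hstep hpi (by omega) hlt),
      countLt_insert_of_lt hγ hlt, hcount]
  · rw [countLt_insert_of_le (hle.trans hγs), countLt_insert_of_le hle, hcount]

lemma level_eq (hinv : LiftInvariant w σ p k) (hpi : p < i) (hik : i ≤ k) :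
    σ i ∈ initImage w k ∧ level (σ i) (initImage σ k) = level (σ i) (initImage w k) := by
  obtain ⟨hmem, hcount⟩ := hinv.mem_countLt_eq i hpi hik
  refine ⟨hmem, ?_⟩
  rw [← countLt_eq_level (apply_mem_initImage (by omega) hik), ← countLt_eq_level hmem, hcount]

end LiftInvariant

lemma liftInvariant_self {Y : Finset ℕ} (hinj : Set.InjOn w (Set.Icc 1 p)) (hY : #Y = p)
    (hdom : Dom Y (initImage w p)) (hσ : ∀ j, 1 ≤ j → j ≤ p → σ j ∈ Y \ initImage σ (j - 1)) :
    LiftInvariant w σ p p where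
  card_eq := by rw [initImage_eq_of_mem_sdiff hY hσ, hY]
  countLt_le := by
    rw [initImage_eq_of_mem_sdiff hY hσ]
    exact (dom_iff_countLt_le (by rw [hY, card_initImage hinj])).mp hdom
  mem_countLt_eq _ hpi hip := absurd hip (by omega)

lemma liftInvariant_of_le (hself : LiftInvariant w σ p p) (hinj : Set.InjOn w (Set.Icc 1 n))
    (hstep : ∀ j, p < j → j ≤ n → MaxLiftStep w σ j) (hpk : p ≤ k) (hkn : k ≤ n) :
    LiftInvariant w σ p k := by
  induction k, hpk using Nat.le_induction with
  | base => exact hself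
  | succ k hpk ih =>
    exact (ih (by omega)).succ (hinj.mono (Set.Icc_subset_Icc_right hkn))
      (hstep (k + 1) (by omega) hkn)

end Lift

end DeodharLift

open DeodharLift in
theorem stmt15_general (n p : ℕ) (w σ : ℕ → ℕ)
    (hw : Set.BijOn w (Set.Icc 1 n) (Set.Icc 1 n))
    (Y : Finset ℕ) (hYc : Y.card = p)
    -- Y ≤ {w_1,...,w_p}:
    (hdom : Dom Y ((Finset.Icc 1 p).image w))
    -- for j ≤ p, σ_j is the maximum element of Y \ {σ_1,...,σ_{j-1}} not exceeding w_j: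
    (hσ1 : ∀ j, 1 ≤ j → j ≤ p →
      ((Y \ ((Finset.Icc 1 (j - 1)).image σ)).filter (fun y => y ≤ w j)).max = (σ j : WithBot ℕ))
    -- for j > p, σ_j is the output of the subroutine with A = {w_1,...,w_{j-1}},
    -- B = {σ_1,...,σ_{j-1}}, γ = w_j (so that A ∪ {γ} = {w_1,...,w_j}):
    -- q is least in {1,...,j} with b̃_q > ã'_q (with b̃_j = ∞), and σ_j = ã'_q:
    (hσ2 : ∀ j, p < j → j ≤ n → ∃ q, 1 ≤ q ∧ q ≤ j ∧
      (q ≤ j - 1 →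
        nth ((Finset.Icc 1 (j - 1)).image σ) q > nth ((Finset.Icc 1 j).image w) q) ∧
      (∀ r, 1 ≤ r → r < q →
        nth ((Finset.Icc 1 (j - 1)).image σ) r ≤ nth ((Finset.Icc 1 j).image w) r) ∧
      σ j = nth ((Finset.Icc 1 j).image w) q) :
    ∀ i, p < i → i ≤ n →
      w i ≤ σ i ∧
      Dom ((Finset.Icc 1 i).image σ) ((Finset.Icc 1 i).image w) ∧
      (σ i ∈ (Finset.Icc 1 i).image w ∧
        level (σ i) ((Finset.Icc 1 i).image σ) = level (σ i) ((Finset.Icc 1 i).image w)) ∧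
      (∀ j, i ≤ j → j ≤ n → σ i ∈ (Finset.Icc 1 j).image w ∧
        level (σ i) ((Finset.Icc 1 j).image σ) = level (σ i) ((Finset.Icc 1 j).image w)) ∧
      (∀ j, i < j → j ≤ n → w j < σ i → σ j < σ i) := by
  intro i hpi hin
  obtain ⟨k, rfl⟩ : ∃ k, i = k + 1 := ⟨i - 1, by omega⟩
  have hinj : ∀ {j}, j ≤ n → Set.InjOn w (Set.Icc 1 j) := fun hjn =>
    hw.injOn.mono (Set.Icc_subset_Icc_right hjn)
  have hσY : ∀ j, 1 ≤ j → j ≤ p → σ j ∈ Y \ initImage σ (j - 1) := fun j h1 h2 =>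
    (Finset.mem_filter.mp (Finset.mem_of_max (hσ1 j h1 h2))).1
  have hinv : ∀ j, p ≤ j → j ≤ n → LiftInvariant w σ p j := fun j hpj hjn =>
    liftInvariant_of_le (liftInvariant_self (hinj (by omega)) hYc hdom hσY) hw.injOn hσ2 hpj hjn
  have hlevel : ∀ j, k + 1 ≤ j → j ≤ n → σ (k + 1) ∈ initImage w j ∧
      level (σ (k + 1)) (initImage σ j) = level (σ (k + 1)) (initImage w j) :=
    fun j hij hjn => (hinv j (by omega) hjn).level_eq hpi hij
  refine ⟨(hinv k (by omega) (by omega)).apply_succ_le (hinj hin) (hσ2 _ hpi hin), ?_,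
    hlevel _ le_rfl hin, hlevel, fun j hij hjn hlt => ?_⟩
  · have hinvi := hinv (k + 1) (by omega) hin
    exact (dom_iff_countLt_le (hinvi.card_eq.trans (card_initImage (hinj hin)).symm)).mpr
      hinvi.countLt_le
  · obtain ⟨m, rfl⟩ : ∃ m, j = m + 1 := ⟨j - 1, by omega⟩
    exact (hinv m (by omega) (by omega)).apply_succ_lt (hinj hjn) (hσ2 _ (by omega) hjn) hpi
      (by omega) hlt

theorem stmt15 (n p : ℕ) (hp : p ≤ n) (w σ : ℕ → ℕ)
    (hw : Set.BijOn w (Set.Icc 1 n) (Set.Icc 1 n))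
    (Y : Finset ℕ) (hYs : Y ⊆ Finset.Icc 1 n) (hYc : Y.card = p)
    -- Y ≤ {w_1,...,w_p}:
    (hdom : Dom Y ((Finset.Icc 1 p).image w))
    -- for j ≤ p, σ_j is the maximum element of Y \ {σ_1,...,σ_{j-1}} not exceeding w_j:
    (hσ1 : ∀ j, 1 ≤ j → j ≤ p →
      ((Y \ ((Finset.Icc 1 (j - 1)).image σ)).filter (fun y => y ≤ w j)).max = (σ j : WithBot ℕ))
    -- for j > p, σ_j is the output of the subroutine with A = {w_1,...,w_{j-1}},
    -- B = {σ_1,...,σ_{j-1}}, γ = w_j (so that A ∪ {γ} = {w_1,...,w_j}):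
    -- q is least in {1,...,j} with b̃_q > ã'_q (with b̃_j = ∞), and σ_j = ã'_q:
    (hσ2 : ∀ j, p < j → j ≤ n → ∃ q, 1 ≤ q ∧ q ≤ j ∧
      (q ≤ j - 1 →
        nth ((Finset.Icc 1 (j - 1)).image σ) q > nth ((Finset.Icc 1 j).image w) q) ∧
      (∀ r, 1 ≤ r → r < q →
        nth ((Finset.Icc 1 (j - 1)).image σ) r ≤ nth ((Finset.Icc 1 j).image w) r) ∧
      σ j = nth ((Finset.Icc 1 j).image w) q) :
    ∀ i, p < i → i ≤ n →
      w i ≤ σ i ∧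
      Dom ((Finset.Icc 1 i).image σ) ((Finset.Icc 1 i).image w) ∧
      (σ i ∈ (Finset.Icc 1 i).image w ∧
        level (σ i) ((Finset.Icc 1 i).image σ) = level (σ i) ((Finset.Icc 1 i).image w)) ∧
      (∀ j, i ≤ j → j ≤ n → σ i ∈ (Finset.Icc 1 j).image w ∧
        level (σ i) ((Finset.Icc 1 j).image σ) = level (σ i) ((Finset.Icc 1 j).image w)) ∧
      (∀ j, i < j → j ≤ n → w j < σ i → σ j < σ i) :=
  stmt15_general n p w σ hw Y hYc hdom hσ1 hσ2
end

section
/- Fix p ≤ n, a p-element subset Y of [n], and w ∈ S_n with {w_1,...,w_p} ≤ Y. Define ξ_1,...,ξ_p recursively by: ξ_j is the least element of Y \ {ξ_1,...,ξ_{j-1}} that is ≥ w_j. Then ξ_j is well-defined for all j (the relevant set is nonempty), and moreover for any i ≤ p and y ∈ Y \ {ξ_1,...,ξ_{i-1}}: (1) ξ_i ≥ w_i; (2) ξ_i > y iff w_i > y; (3) |{k ≤ i : w_k ≤ y}| = |{k ≤ i : ξ_k ≤ y}|. -/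
/-! The greedy choice keeps the Hall-type invariant
`#{y ∈ Y \ {ξ_1,…,ξ_m} : y < t} ≤ #{k ∈ (m, p] : w_k < t}` for every `t`, which for `m = 0` is the
counting form of `{w_1,…,w_p} ≤ Y`. Taking `t = w_j` at step `j` shows that some remaining
`y ≥ w_j` exists. The three claims only use that `ξ_k` is the least remaining `y ≥ w_k`,
so `ξ_k ≤ y ↔ w_k ≤ y` for every `y ∈ Y` outside `{ξ_1,…,ξ_{k-1}}`. -/

open Finset

theorem List.Forall₂.countP_lt_le {α : Type*} [Preorder α] [DecidableLT α] {l₁ l₂ : List α}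
    (h : List.Forall₂ (· ≤ ·) l₁ l₂) (t : α) :
    l₂.countP (· < t) ≤ l₁.countP (· < t) := by
  induction h with
  | nil => simp
  | @cons a b _ _ hab _ ih =>
    simp only [List.countP_cons]
    by_cases hb : b < t
    · simp [hb, hab.trans_lt hb, ih]
    · simp only [hb, decide_false, Bool.false_eq_true, if_false, add_zero]
      exact ih.trans (Nat.le_add_right _ _)

theorem Finset.card_filter_eq_countP_sort {α : Type*} [LinearOrder α] (s : Finset α)
    (P : α → Prop) [DecidablePred P] :
    #(s.filter P) = (s.sort (· ≤ ·)).countP (P ·) := by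
  rw [← Multiset.coe_countP, sort_eq, Multiset.countP_eq_card_filter]
  rfl

theorem Dom.card_filter_lt_le {E F : Finset ℕ} (h : Dom E F) (t : ℕ) :
    #(F.filter (· < t)) ≤ #(E.filter (· < t)) := by
  rw [card_filter_eq_countP_sort, card_filter_eq_countP_sort]
  exact h.countP_lt_le t

theorem card_filter_erase_lt_le {R K : Finset ℕ} {f : ℕ → ℕ} {k x : ℕ} (hk : k ∈ K) (hx : x ∈ R)
    (hfx : f k ≤ x) (hmin : ∀ y ∈ R, f k ≤ y → x ≤ y)
    (h : ∀ t, #(R.filter (· < t)) ≤ #(K.filter (f · < t))) (t : ℕ) :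
    #((R.erase x).filter (· < t)) ≤ #((K.erase k).filter (f · < t)) := by
  by_cases hgap : f k < t ∧ t ≤ x
  · -- no remaining element lies in `[f k, t)`, so only `f k` is the relevant threshold
    have hR : (R.erase x).filter (· < t) ⊆ R.filter (· < f k) := by
      intro y hy
      simp only [mem_filter, mem_erase] at hy ⊢
      exact ⟨hy.1.2, lt_of_not_ge fun hky => by have := hmin y hy.1.2 hky; omega⟩
    have hK : K.filter (f · < f k) ⊆ (K.erase k).filter (f · < t) := by
      intro l hl
      simp only [mem_filter, mem_erase] at hl ⊢
      exact ⟨⟨by rintro rfl; exact lt_irrefl _ hl.2, hl.1⟩, hl.2.trans hgap.1⟩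
    exact (card_le_card hR).trans ((h (f k)).trans (card_le_card hK))
  · have hsame : x < t ↔ f k < t := ⟨hfx.trans_lt, fun h' => lt_of_not_ge (hgap ⟨h', ·⟩)⟩
    rw [filter_erase, filter_erase, card_erase_eq_ite, card_erase_eq_ite]
    simp only [mem_filter, hx, hk, true_and, hsame]
    have := h t
    split <;> omega

section Greedy

variable (Y : Finset ℕ) (w ξ : ℕ → ℕ)

def remaining (m : ℕ) : Finset ℕ := Y \ (Icc 1 m).image ξ

def IsGreedyChoice (j : ℕ) : Prop :=
  ((remaining Y ξ (j - 1)).filter (w j ≤ ·)).min = (ξ j : WithTop ℕ)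

variable {Y w ξ}

theorem remaining_succ (m : ℕ) : remaining Y ξ (m + 1) = (remaining Y ξ m).erase (ξ (m + 1)) := by
  rw [remaining, ← insert_Icc_right_eq_Icc_add_one (by omega), image_insert, sdiff_insert]
  rfl

theorem remaining_anti {m m' : ℕ} (h : m ≤ m') : remaining Y ξ m' ⊆ remaining Y ξ m :=
  sdiff_subset_sdiff subset_rfl (image_subset_image (Icc_subset_Icc_right h))

namespace IsGreedyChoice

variable {j : ℕ} (h : IsGreedyChoice Y w ξ j)
include h

theorem mem_remaining : ξ j ∈ remaining Y ξ (j - 1) :=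
  (mem_filter.1 (mem_of_min h)).1

theorem le : w j ≤ ξ j :=
  (mem_filter.1 (mem_of_min h)).2

theorem le_of_mem {y : ℕ} (hy : y ∈ remaining Y ξ (j - 1)) (hwy : w j ≤ y) : ξ j ≤ y := by
  have := min_le (mem_filter.2 ⟨hy, hwy⟩)
  rw [h] at this
  exact WithTop.coe_le_coe.1 this

theorem le_iff {y : ℕ} (hy : y ∈ remaining Y ξ (j - 1)) : ξ j ≤ y ↔ w j ≤ y :=
  ⟨h.le.trans, h.le_of_mem hy⟩

end IsGreedyChoice

theorem card_remaining_add {m : ℕ} (hξ : ∀ k, 1 ≤ k → k ≤ m → IsGreedyChoice Y w ξ k) :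
    #(remaining Y ξ m) + m = #Y := by
  induction m with
  | zero => simp [remaining]
  | succ m ih =>
    have hmem : ξ (m + 1) ∈ remaining Y ξ m := (hξ (m + 1) (by omega) le_rfl).mem_remaining
    rw [remaining_succ, card_erase_of_mem hmem, ← ih fun k h1 h2 => hξ k h1 (by omega)]
    have := card_pos.2 ⟨_, hmem⟩
    omega

theorem card_remaining_filter_lt_le {p m : ℕ} (hm : m ≤ p)
    (hξ : ∀ k, 1 ≤ k → k ≤ m → IsGreedyChoice Y w ξ k)
    (h₀ : ∀ t, #(Y.filter (· < t)) ≤ #((Icc 1 p).filter (w · < t))) (t : ℕ) :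
    #((remaining Y ξ m).filter (· < t)) ≤ #((Icc (m + 1) p).filter (w · < t)) := by
  induction m generalizing t with
  | zero => simpa [remaining] using h₀ t
  | succ m ih =>
    have hgreedy := hξ (m + 1) (by omega) le_rfl
    rw [remaining_succ, Icc_add_one_left_eq_Ioc, ← Icc_erase_left]
    exact card_filter_erase_lt_le (mem_Icc.2 ⟨le_rfl, hm⟩) hgreedy.mem_remaining hgreedy.le
      (fun y hy => hgreedy.le_of_mem hy) (ih (by omega) fun k h1 h2 => hξ k h1 (by omega)) t

theorem injOn_of_isGreedyChoice {m : ℕ} (hξ : ∀ k, 1 ≤ k → k ≤ m → IsGreedyChoice Y w ξ k) :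
    Set.InjOn ξ (Icc 1 m) := by
  have key : ∀ k l, 1 ≤ k → k < l → l ≤ m → ξ k ≠ ξ l := fun k l hk hkl hlm heq =>
    (mem_sdiff.1 (hξ l (by omega) hlm).mem_remaining).2
      (mem_image.2 ⟨k, mem_Icc.2 ⟨hk, by omega⟩, heq⟩)
  intro k hk l hl heq
  simp only [coe_Icc, Set.mem_Icc] at hk hl
  rcases lt_trichotomy k l with hkl | rfl | hlk
  · exact absurd heq (key k l hk.1 hkl hl.2)
  · rfl
  · exact absurd heq.symm (key l k hl.1 hlk hk.2)

theorem nonempty_filter_remaining {p j : ℕ} (hj : 1 ≤ j) (hjp : j ≤ p) (hY : #Y = p)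
    (hξ : ∀ k, 1 ≤ k → k < j → IsGreedyChoice Y w ξ k)
    (h₀ : ∀ t, #(Y.filter (· < t)) ≤ #((Icc 1 p).filter (w · < t))) :
    ((remaining Y ξ (j - 1)).filter (w j ≤ ·)).Nonempty := by
  have hξ' : ∀ k, 1 ≤ k → k ≤ j - 1 → IsGreedyChoice Y w ξ k := fun k h1 h2 => hξ k h1 (by omega)
  by_contra hempty
  rw [not_nonempty_iff_eq_empty, filter_eq_empty_iff] at hempty
  have hall : (remaining Y ξ (j - 1)).filter (· < w j) = remaining Y ξ (j - 1) :=
    filter_true_of_mem fun y hy => lt_of_not_ge (hempty hy)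
  have hcount := card_remaining_filter_lt_le (by omega) hξ' h₀ (w j)
  rw [hall, Nat.sub_add_cancel hj] at hcount
  have hlower : (Icc j p).filter (w · < w j) ⊆ (Icc j p).erase j := fun k hk =>
    mem_erase.2 ⟨by rintro rfl; exact lt_irrefl _ (mem_filter.1 hk).2, (mem_filter.1 hk).1⟩
  have := card_le_card hlower
  rw [card_erase_of_mem (mem_Icc.2 ⟨le_rfl, hjp⟩), Nat.card_Icc] at this
  have := card_remaining_add hξ'
  omega

end Greedy

theorem stmt17_general (n p : ℕ) (hp : p ≤ n) (w ξ : ℕ → ℕ)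
    (hw : Set.BijOn w (Set.Icc 1 n) (Set.Icc 1 n))
    (Y : Finset ℕ) (hYc : Y.card = p)
    -- {w_1,...,w_p} ≤ Y:
    (hdom : Dom ((Finset.Icc 1 p).image w) Y) :
    -- ξ_j is well defined: if ξ_1, ..., ξ_{j-1} have been chosen by the rule, then the set
    -- from which ξ_j is to be chosen as the minimum is nonempty:
    (∀ j, 1 ≤ j → j ≤ p →
      (∀ k, 1 ≤ k → k < j →
        ((Y \ ((Finset.Icc 1 (k - 1)).image ξ)).filter (fun y => w k ≤ y)).min = (ξ k : WithTop ℕ)) →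
      ((Y \ ((Finset.Icc 1 (j - 1)).image ξ)).filter (fun y => w j ≤ y)).Nonempty) ∧
    -- and if ξ_1, ..., ξ_p are all chosen by the rule, then:
    ((∀ j, 1 ≤ j → j ≤ p →
        ((Y \ ((Finset.Icc 1 (j - 1)).image ξ)).filter (fun y => w j ≤ y)).min = (ξ j : WithTop ℕ)) →
      ∀ i, 1 ≤ i → i ≤ p → ∀ y ∈ Y \ ((Finset.Icc 1 (i - 1)).image ξ),
        w i ≤ ξ i ∧
        (y < ξ i ↔ y < w i) ∧
        ((((Finset.Icc 1 i).image w).filter (fun x => x ≤ y)).card =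
          (((Finset.Icc 1 i).image ξ).filter (fun x => x ≤ y)).card)) := by
  have h₀ : ∀ t, #(Y.filter (· < t)) ≤ #((Icc 1 p).filter (w · < t)) := fun t =>
    (hdom.card_filter_lt_le t).trans (by rw [filter_image]; exact card_image_le)
  refine ⟨fun j hj hjp hξ => nonempty_filter_remaining hj hjp hYc hξ h₀, ?_⟩
  intro hξ i hi hip y hy
  have hξi : ∀ k, 1 ≤ k → k ≤ i → IsGreedyChoice Y w ξ k := fun k h1 h2 => hξ k h1 (by omega)
  have hle_iff : ∀ k ∈ Icc 1 i, ξ k ≤ y ↔ w k ≤ y := fun k hk => by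
    obtain ⟨hk1, hki⟩ := mem_Icc.1 hk
    exact (hξi k hk1 hki).le_iff (remaining_anti (by omega) hy)
  have hwinj : Set.InjOn w (Icc 1 i) :=
    hw.injOn.mono (by rw [coe_Icc]; exact Set.Icc_subset_Icc_right (by omega))
  refine ⟨(hξi i hi le_rfl).le, ?_, ?_⟩
  · simpa only [not_le] using (hle_iff i (mem_Icc.2 ⟨hi, le_rfl⟩)).not
  · rw [filter_image, filter_image, filter_congr fun k hk => (hle_iff k hk).symm,
      card_image_of_injOn (hwinj.mono (coe_subset.2 (filter_subset _ _))),
      card_image_of_injOn ((injOn_of_isGreedyChoice hξi).mono (coe_subset.2 (filter_subset _ _)))]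

theorem stmt17 (n p : ℕ) (hp : p ≤ n) (w ξ : ℕ → ℕ)
    (hw : Set.BijOn w (Set.Icc 1 n) (Set.Icc 1 n))
    (Y : Finset ℕ) (hYs : Y ⊆ Finset.Icc 1 n) (hYc : Y.card = p)
    -- {w_1,...,w_p} ≤ Y:
    (hdom : Dom ((Finset.Icc 1 p).image w) Y) :
    -- ξ_j is well defined: if ξ_1, ..., ξ_{j-1} have been chosen by the rule, then the set
    -- from which ξ_j is to be chosen as the minimum is nonempty:
    (∀ j, 1 ≤ j → j ≤ p →
      (∀ k, 1 ≤ k → k < j →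
        ((Y \ ((Finset.Icc 1 (k - 1)).image ξ)).filter (fun y => w k ≤ y)).min = (ξ k : WithTop ℕ)) →
      ((Y \ ((Finset.Icc 1 (j - 1)).image ξ)).filter (fun y => w j ≤ y)).Nonempty) ∧
    -- and if ξ_1, ..., ξ_p are all chosen by the rule, then:
    ((∀ j, 1 ≤ j → j ≤ p →
        ((Y \ ((Finset.Icc 1 (j - 1)).image ξ)).filter (fun y => w j ≤ y)).min = (ξ j : WithTop ℕ)) →
      ∀ i, 1 ≤ i → i ≤ p → ∀ y ∈ Y \ ((Finset.Icc 1 (i - 1)).image ξ),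
        w i ≤ ξ i ∧
        (y < ξ i ↔ y < w i) ∧
        ((((Finset.Icc 1 i).image w).filter (fun x => x ≤ y)).card =
          (((Finset.Icc 1 i).image ξ).filter (fun x => x ≤ y)).card)) :=
  stmt17_general n p hp w ξ hw Y hYc hdom
end
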